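/- arXiv:math/0605686 — 5 statements merged into one kernel-verified Lean document; each statement's English description precedes it below -/
import Mathlib

section
/- Let T be a positive bounded operator on a Hilbert space H and let S be a separating family of norm-one vectors in H (i.e., for any bounded operator A, if Aξ = 0 for all ξ ∈ S then A = 0). Then ‖T‖ = lim_{n→∞} sup_{ξ∈S} ⟨ξ, Tⁿ ξ⟩^{1/n}. -/
/-!
The estimate `⟨ξ, Tⁿξ⟩ ≤ ‖T‖ⁿ` for unit vectors gives the upper bound. For the lower bound fix
`0 ≤ r < ‖T‖` and put `b = f(T)` with `f = min 1 (max 0 (· - r))`. Since `‖T‖ ∈ σ(T)` and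
`f(‖T‖) ≠ 0`, `b ≠ 0`; since `rⁿ f(x)² ≤ xⁿ` for `x ≥ 0`, `rⁿ b*b ≤ Tⁿ`. As `S` is separating, some
`ξ ∈ S` has `bξ ≠ 0`, so `⟨ξ, Tⁿξ⟩ ≥ rⁿ ‖bξ‖²`, and the `n`-th roots are eventually close to `r`.
-/

open Filter Topology

lemma CStarAlgebra.exists_ne_zero_smul_star_mul_self_le_pow {A : Type*} [CStarAlgebra A]
    [PartialOrder A] [StarOrderedRing A] {a : A} (ha : 0 ≤ a) {r : ℝ} (hr : 0 ≤ r)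
    (hra : r < ‖a‖) : ∃ b : A, b ≠ 0 ∧ ∀ n : ℕ, r ^ n • (star b * b) ≤ a ^ n := by
  have : Nontrivial A := ⟨a, 0, by rintro rfl; simp at hra; linarith⟩
  set f : ℝ → ℝ := fun x => min 1 (max 0 (x - r))
  refine ⟨cfc f a, fun h => ?_, fun n => ?_⟩
  · rw [← cfc_zero ℝ a, cfc_eq_cfc_iff_eqOn] at h
    exact (lt_min one_pos (lt_max_of_lt_right (sub_pos.2 hra))).ne'
      (h (CStarAlgebra.norm_mem_spectrum_of_nonneg ha))
  · rw [(cfc_predicate f a).star_eq, ← cfc_mul f f a, ← cfc_const_mul (r ^ n) _ a,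
      ← cfc_pow_id (R := ℝ) a n]
    refine cfc_mono fun x hx => ?_
    have hx0 : 0 ≤ x := spectrum_nonneg_of_nonneg ha hx
    rcases le_or_gt x r with hxr | hrx
    · simp [f, hxr, hx0]
    · have hf1 : f x * f x ≤ 1 := mul_le_one₀ (min_le_left _ _) (by positivity) (min_le_left _ _)
      calc r ^ n * (f x * f x) ≤ r ^ n * 1 := by gcongr
        _ ≤ x ^ n := by rw [mul_one]; exact pow_le_pow_left₀ hr hrx.le n

lemma tendsto_rpow_inv_natCast_nhds_one {c : ℝ} (hc : 0 < c) :
    Tendsto (fun n : ℕ => c ^ (n⁻¹ : ℝ)) atTop (𝓝 1) := by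
  simpa [Function.comp_def] using ((Real.continuousAt_const_rpow hc.ne').tendsto.comp
    (tendsto_inv_atTop_zero.comp tendsto_natCast_atTop_atTop) :
      Tendsto (fun n : ℕ => c ^ (n⁻¹ : ℝ)) atTop (𝓝 (c ^ (0 : ℝ))))

namespace ContinuousLinearMap

variable {H : Type*} [NormedAddCommGroup H] [InnerProductSpace ℂ H]

lemma IsPositive.pow [CompleteSpace H] {T : H →L[ℂ] H} (hT : T.IsPositive) (n : ℕ) :
    (T ^ n).IsPositive :=
  (nonneg_iff_isPositive _).1 (CStarAlgebra.pow_nonneg ((nonneg_iff_isPositive T).2 hT) n)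

lemma re_inner_pow_le_norm_pow (T : H →L[ℂ] H) {ξ : H} (hξ : ‖ξ‖ = 1) {n : ℕ} (hn : n ≠ 0) :
    (inner ℂ ξ ((T ^ n) ξ)).re ≤ ‖T‖ ^ n :=
  calc (inner ℂ ξ ((T ^ n) ξ)).re ≤ ‖ξ‖ * ‖(T ^ n) ξ‖ :=
        (Complex.re_le_norm _).trans (norm_inner_le_norm _ _)
    _ ≤ ‖T ^ n‖ := by simpa [hξ] using (T ^ n).le_opNorm ξ
    _ ≤ ‖T‖ ^ n := norm_pow_le' T (Nat.pos_of_ne_zero hn)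

lemma re_inner_pow_rpow_inv_le_norm [CompleteSpace H] {T : H →L[ℂ] H} (hT : T.IsPositive)
    {ξ : H} (hξ : ‖ξ‖ = 1) {n : ℕ} (hn : n ≠ 0) :
    (inner ℂ ξ ((T ^ n) ξ)).re ^ (n⁻¹ : ℝ) ≤ ‖T‖ := by
  calc (inner ℂ ξ ((T ^ n) ξ)).re ^ (n⁻¹ : ℝ) ≤ (‖T‖ ^ n) ^ (n⁻¹ : ℝ) := by
        gcongr
        · exact (hT.pow n).re_inner_nonneg_right ξ
        · exact re_inner_pow_le_norm_pow T hξ hn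
    _ = ‖T‖ := Real.pow_rpow_inv_natCast (norm_nonneg T) hn

lemma exists_mem_pow_mul_le_re_inner_pow [CompleteSpace H] {T : H →L[ℂ] H}
    (hT : T.IsPositive) {S : Set H} (hS : ∀ A : H →L[ℂ] H, (∀ ξ ∈ S, A ξ = 0) → A = 0)
    {r : ℝ} (hr : 0 ≤ r) (hrT : r < ‖T‖) :
    ∃ ξ ∈ S, ∃ c > 0, ∀ n : ℕ, r ^ n * c ≤ (inner ℂ ξ ((T ^ n) ξ)).re := by
  obtain ⟨B, hB, hBT⟩ := CStarAlgebra.exists_ne_zero_smul_star_mul_self_le_pow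
    ((nonneg_iff_isPositive T).2 hT) hr hrT
  obtain ⟨ξ, hξS, hBξ⟩ : ∃ ξ ∈ S, B ξ ≠ 0 := by
    by_contra! h
    exact hB (hS B h)
  refine ⟨ξ, hξS, ‖B ξ‖ ^ 2, by positivity, fun n => ?_⟩
  have h := ((le_def _ _).1 (hBT n)).re_inner_nonneg_right ξ
  rwa [sub_apply, inner_sub_right, map_sub, sub_nonneg, smul_apply,
    RCLike.real_smul_eq_coe_smul (K := ℂ), inner_smul_right, RCLike.re_ofReal_mul, star_eq_adjoint,
    mul_def, ← apply_norm_sq_eq_inner_adjoint_right] at h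

lemma iSup_re_inner_pow_rpow_inv_le_norm [CompleteSpace H] {T : H →L[ℂ] H} (hT : T.IsPositive)
    {S : Set H} (hS1 : ∀ ξ ∈ S, ‖ξ‖ = 1) {n : ℕ} (hn : n ≠ 0) :
    ⨆ ξ : S, (inner ℂ (ξ : H) ((T ^ n) ξ)).re ^ (n⁻¹ : ℝ) ≤ ‖T‖ :=
  Real.iSup_le (fun ξ => re_inner_pow_rpow_inv_le_norm hT (hS1 ξ ξ.2) hn) (norm_nonneg T)

lemma eventually_lt_iSup_re_inner_pow_rpow_inv [CompleteSpace H] {T : H →L[ℂ] H}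
    (hT : T.IsPositive) {S : Set H} (hS1 : ∀ ξ ∈ S, ‖ξ‖ = 1)
    (hS : ∀ A : H →L[ℂ] H, (∀ ξ ∈ S, A ξ = 0) → A = 0) {b : ℝ} (hb : b < ‖T‖) :
    ∀ᶠ n : ℕ in atTop, b < ⨆ ξ : S, (inner ℂ (ξ : H) ((T ^ n) ξ)).re ^ (n⁻¹ : ℝ) := by
  rcases lt_or_ge b 0 with hb0 | hb0
  · exact .of_forall fun n => hb0.trans_le <| Real.iSup_nonneg fun ξ =>
      Real.rpow_nonneg ((hT.pow n).re_inner_nonneg_right ξ) _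
  obtain ⟨r, hbr, hrT⟩ := exists_between hb
  have hr : 0 ≤ r := hb0.trans hbr.le
  obtain ⟨ξ, hξS, c, hc, hrc⟩ := exists_mem_pow_mul_le_re_inner_pow hT hS hr hrT
  have hlim : Tendsto (fun n : ℕ => r * c ^ (n⁻¹ : ℝ)) atTop (𝓝 r) := by
    simpa using (tendsto_rpow_inv_natCast_nhds_one hc).const_mul r
  filter_upwards [hlim.eventually (lt_mem_nhds hbr), eventually_ne_atTop 0] with n hbn hn
  have hbdd : BddAbove (Set.range fun ξ : S => (inner ℂ (ξ : H) ((T ^ n) ξ)).re ^ (n⁻¹ : ℝ)) :=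
    ⟨‖T‖, Set.forall_mem_range.2 fun ξ => re_inner_pow_rpow_inv_le_norm hT (hS1 ξ ξ.2) hn⟩
  calc b < r * c ^ (n⁻¹ : ℝ) := hbn
    _ = (r ^ n * c) ^ (n⁻¹ : ℝ) := by
      rw [Real.mul_rpow (by positivity) hc.le, Real.pow_rpow_inv_natCast hr hn]
    _ ≤ (inner ℂ ξ ((T ^ n) ξ)).re ^ (n⁻¹ : ℝ) :=
      Real.rpow_le_rpow (by positivity) (hrc n) (by positivity)
    _ ≤ ⨆ ξ : S, (inner ℂ (ξ : H) ((T ^ n) ξ)).re ^ (n⁻¹ : ℝ) :=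
      le_ciSup (f := fun ξ : S => (inner ℂ (ξ : H) ((T ^ n) ξ)).re ^ (n⁻¹ : ℝ)) hbdd ⟨ξ, hξS⟩

end ContinuousLinearMap

/-- For a positive bounded operator `T` on a Hilbert space and a separating
family `S` of norm-one vectors, `‖T‖ = lim_n sup_{ξ ∈ S} ⟨ξ, Tⁿξ⟩^(1/n)`. -/
theorem norm_eq_lim_iSup_inner_pow
    {H : Type*} [NormedAddCommGroup H] [InnerProductSpace ℂ H] [CompleteSpace H]
    (T : H →L[ℂ] H) (hT : T.IsPositive)
    (S : Set H) (hS1 : ∀ ξ ∈ S, ‖ξ‖ = 1)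
    (hSsep : ∀ A : H →L[ℂ] H, (∀ ξ ∈ S, A ξ = 0) → A = 0) :
    Tendsto (fun n : ℕ => ⨆ ξ : S, ((inner ℂ (ξ : H) ((T ^ n) (ξ : H)) : ℂ).re) ^ ((n : ℝ)⁻¹))
      atTop (nhds ‖T‖) := by
  refine tendsto_order.2 ⟨fun b hb => ?_, fun b hb => ?_⟩
  · exact ContinuousLinearMap.eventually_lt_iSup_re_inner_pow_rpow_inv hT hS1 hSsep hb
  · filter_upwards [eventually_ne_atTop 0] with n hn
    exact (ContinuousLinearMap.iSup_re_inner_pow_rpow_inv_le_norm hT hS1 hn).trans_lt hb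
end

section
/- If T is a positive bounded operator on a Hilbert space and S is a separating family of unit vectors for B(H), then the union over ξ ∈ S of the supports of the spectral measures μ_ξ is dense in the spectrum of T. -/
/-!
If `l ∈ σ(T)` lies outside the closure `K` of the union of the supports, Urysohn's lemma gives a
continuous `g` with `g = 0` on `K` and `g l = 1`. By Weierstrass approximation the moment
identities extend from powers to all continuous functions, `⟨ξ, f(T) ξ⟩ = ∫ f dμ_ξ`, so
`‖g(T) ξ‖² = ∫ g² dμ_ξ = 0` for every `ξ ∈ S`. Since `S` is separating, `g(T) = 0`, which
contradicts `g l = 1` for `l ∈ σ(T)`.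
-/

open MeasureTheory

/-- The topological support of a measure on `ℝ`: the points all of whose open
neighbourhoods have positive measure. -/
def measureSupport (μ : Measure ℝ) : Set ℝ :=
  {x : ℝ | ∀ U : Set ℝ, IsOpen U → x ∈ U → 0 < μ U}

open Polynomial Set

lemma measure_measureSupport_compl (μ : Measure ℝ) : μ (measureSupport μ)ᶜ = 0 := by
  refine measure_null_of_locally_null _ fun x hx ↦ ?_
  simp only [measureSupport, mem_compl_iff, mem_ofPred_eq, not_forall, not_lt,
    nonpos_iff_eq_zero] at hx
  obtain ⟨U, hU, hxU, hμU⟩ := hx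
  exact ⟨U, mem_nhdsWithin_of_mem_nhds (hU.mem_nhds hxU), hμU⟩

lemma integral_eq_zero_of_eqOn_measureSupport {μ : Measure ℝ} {f : ℝ → ℝ}
    (hf : EqOn f 0 (measureSupport μ)) : ∫ x, f x ∂μ = 0 :=
  integral_eq_zero_of_ae <| measure_mono_null (fun x hx ↦ mt (@hf x) hx)
    (measure_measureSupport_compl μ)

lemma Continuous.integrable_of_ae_mem_compact {X : Type*} [TopologicalSpace X] [T2Space X]
    [MeasurableSpace X] [OpensMeasurableSpace X] {μ : Measure X} [IsFiniteMeasure μ]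
    {s : Set X} (hs : IsCompact s) (hμ : ∀ᵐ x ∂μ, x ∈ s) {f : X → ℝ} (hf : Continuous f) :
    Integrable f μ := by
  rw [← Measure.restrict_eq_self_of_ae_mem hμ]
  exact hf.continuousOn.integrableOn_compact hs

lemma abs_integral_sub_integral_le {X : Type*} [MeasurableSpace X] {μ : Measure X}
    [IsFiniteMeasure μ] {f g : X → ℝ} (hf : Integrable f μ) (hg : Integrable g μ) {δ : ℝ}
    (hfg : ∀ᵐ x ∂μ, |f x - g x| ≤ δ) :
    |∫ x, f x ∂μ - ∫ x, g x ∂μ| ≤ δ * μ.real univ := by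
  rw [← integral_sub hf hg]
  exact norm_integral_le_of_norm_le_const (f := fun x ↦ f x - g x) hfg

lemma ContinuousLinearMap.abs_re_inner_apply_le {H : Type*} [NormedAddCommGroup H]
    [InnerProductSpace ℂ H] (A : H →L[ℂ] H) (ξ : H) :
    |(inner ℂ ξ (A ξ)).re| ≤ ‖A‖ * ‖ξ‖ ^ 2 :=
  calc |(inner ℂ ξ (A ξ)).re|
      _ ≤ ‖ξ‖ * ‖A ξ‖ := (Complex.abs_re_le_norm _).trans (norm_inner_le_norm _ _)
      _ ≤ ‖ξ‖ * (‖A‖ * ‖ξ‖) := by gcongr; exact A.le_opNorm ξ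
      _ = ‖A‖ * ‖ξ‖ ^ 2 := by ring

section

variable {H : Type*} [NormedAddCommGroup H] [InnerProductSpace ℂ H]

lemma re_inner_aeval_apply_eq_integral {T : H →L[ℂ] H} {ξ : H} {μ : Measure ℝ}
    (hint : ∀ p : ℝ[X], Integrable (fun x ↦ p.eval x) μ)
    (hmom : ∀ n : ℕ, (inner ℂ ξ ((T ^ n) ξ)).re = ∫ x, x ^ n ∂μ) (p : ℝ[X]) :
    (inner ℂ ξ (aeval T p ξ)).re = ∫ x, p.eval x ∂μ := by
  induction p using Polynomial.induction_on' with
  | add p q hp hq =>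
    simp only [map_add, add_apply, inner_add_right, Complex.add_re, eval_add, hp, hq,
      integral_add (hint p) (hint q)]
  | monomial n c =>
    rw [aeval_monomial, Algebra.algebraMap_eq_smul_one, smul_one_mul]
    simp [eval_monomial, integral_const_mul, ← hmom n]

variable [CompleteSpace H]

lemma ContinuousLinearMap.IsPositive.spectrum_subset_Icc {T : H →L[ℂ] H} (hT : T.IsPositive) :
    spectrum ℝ T ⊆ Icc 0 ‖T‖ := by
  nontriviality (H →L[ℂ] H)
  exact fun x hx ↦ ⟨spectrum_nonneg_of_nonneg (T.nonneg_iff_isPositive.mpr hT) hx,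
    (le_abs_self x).trans (spectrum.norm_le_norm_of_mem hx)⟩

lemma abs_re_inner_cfc_sub_le {T : H →L[ℂ] H} (ξ : H) {f g : ℝ → ℝ} {δ : ℝ} (hδ : 0 ≤ δ)
    (hf : ContinuousOn f (spectrum ℝ T)) (hg : ContinuousOn g (spectrum ℝ T))
    (hfg : ∀ x ∈ spectrum ℝ T, |f x - g x| ≤ δ) :
    |(inner ℂ ξ (cfc f T ξ)).re - (inner ℂ ξ (cfc g T ξ)).re| ≤ δ * ‖ξ‖ ^ 2 := by
  have hnorm : ‖cfc f T - cfc g T‖ ≤ δ := by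
    rw [← cfc_sub f g T]
    exact norm_cfc_le hδ hfg
  rw [← Complex.sub_re, ← inner_sub_right, ← sub_apply]
  exact ((cfc f T - cfc g T).abs_re_inner_apply_le ξ).trans (by gcongr)

lemma norm_cfc_apply_sq (g : ℝ → ℝ) (T : H →L[ℂ] H) (ξ : H)
    (hg : ContinuousOn g (spectrum ℝ T) := by cfc_cont_tac) :
    ‖cfc g T ξ‖ ^ 2 = (inner ℂ ξ (cfc (fun x ↦ g x * g x) T ξ)).re := by
  have hsa : IsSelfAdjoint (cfc g T) := cfc_predicate g T
  rw [(cfc g T).apply_norm_sq_eq_inner_adjoint_right, hsa.adjoint_eq, cfc_mul g g T]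
  rfl

lemma re_inner_cfc_apply_eq_integral {T : H →L[ℂ] H} {ξ : H} {μ : Measure ℝ} {a b : ℝ}
    (hT : IsSelfAdjoint T) (hspec : spectrum ℝ T ⊆ Icc a b)
    [IsFiniteMeasure μ] (hμ : ∀ᵐ x ∂μ, x ∈ Icc a b)
    (hmom : ∀ n : ℕ, (inner ℂ ξ ((T ^ n) ξ)).re = ∫ x, x ^ n ∂μ) {f : ℝ → ℝ} (hf : Continuous f) :
    (inner ℂ ξ (cfc f T ξ)).re = ∫ x, f x ∂μ := by
  have hintegrable {g : ℝ → ℝ} (hg : Continuous g) : Integrable g μ :=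
    hg.integrable_of_ae_mem_compact isCompact_Icc hμ
  set C := ‖ξ‖ ^ 2 + μ.real univ
  refine eq_of_forall_dist_le fun ε hε ↦ ?_
  obtain ⟨p, hp⟩ := exists_polynomial_near_of_continuousOn a b f hf.continuousOn
    (ε / (C + 1)) (by positivity)
  have hop := abs_re_inner_cfc_sub_le ξ (δ := ε / (C + 1)) (by positivity) hf.continuousOn
    p.continuous.continuousOn fun x hx ↦ by rw [abs_sub_comm]; exact (hp x (hspec hx)).le
  rw [cfc_polynomial p T, re_inner_aeval_apply_eq_integral (hintegrable ·.continuous) hmom] at hop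
  have hint := abs_integral_sub_integral_le (hintegrable p.continuous) (hintegrable hf)
    (hμ.mono fun x hx ↦ (hp x hx).le)
  calc dist _ _
      _ ≤ ε / (C + 1) * ‖ξ‖ ^ 2 + ε / (C + 1) * μ.real univ :=
        (dist_triangle _ _ _).trans (add_le_add hop hint)
      _ = ε * (C / (C + 1)) := by ring
      _ ≤ ε * 1 := by gcongr; exact (div_le_one (by positivity)).mpr (by linarith)
      _ = ε := mul_one ε

end

theorem spectrum_subset_closure_iUnion_support_general
    {H : Type*} [NormedAddCommGroup H] [InnerProductSpace ℂ H] [CompleteSpace H]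
    (T : H →L[ℂ] H) (hT : T.IsPositive)
    (S : Set H)
    (hSsep : ∀ A : H →L[ℂ] H, (∀ ξ ∈ S, A ξ = 0) → A = 0)
    (μ : H → Measure ℝ) (hfin : ∀ ξ, IsFiniteMeasure (μ ξ))
    -- each μ ξ is the spectral measure of T at ξ : supported on [0, ‖T‖] with
    -- ⟨ξ, f(T) ξ⟩ = ∫ f dμ_ξ for bounded Borel f, in particular for the powers
    (hsupp : ∀ ξ ∈ S, (μ ξ) (Set.Icc 0 ‖T‖)ᶜ = 0)
    (hmom : ∀ ξ ∈ S, ∀ n : ℕ, (inner ℂ ξ ((T ^ n) ξ) : ℂ).re = ∫ x, x ^ n ∂(μ ξ)) :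
    spectrum ℝ T ⊆ closure (⋃ ξ ∈ S, measureSupport (μ ξ)) := by
  intro l hl
  by_contra hlK
  obtain ⟨g, hgK, hgl, -⟩ := exists_continuous_zero_one_of_isClosed isClosed_closure
    isClosed_singleton (disjoint_singleton_right.mpr hlK)
  have hvanish : ∀ ξ ∈ S, cfc g T ξ = 0 := fun ξ hξ ↦ by
    have := hfin ξ
    rw [← norm_eq_zero, ← sq_eq_zero_iff, norm_cfc_apply_sq g T ξ,
      re_inner_cfc_apply_eq_integral hT.isSelfAdjoint hT.spectrum_subset_Icc
        (ae_iff.mpr (hsupp ξ hξ)) (hmom ξ hξ) (by fun_prop)]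
    refine integral_eq_zero_of_eqOn_measureSupport fun x hx ↦ ?_
    simp [hgK (subset_closure (mem_biUnion hξ hx))]
  have hgl_zero := (eqOn_of_cfc_eq_cfc ((hSsep _ hvanish).trans (cfc_zero ℝ T).symm)
    (ha := hT.isSelfAdjoint)) hl
  simp [hgl rfl] at hgl_zero

/-- If `T` is a positive bounded operator on a Hilbert space and `S` is a
separating family of unit vectors, then the union over `ξ ∈ S` of the supports of the
spectral measures `μ_ξ` is dense in the spectrum of `T`. -/
theorem spectrum_subset_closure_iUnion_support
    {H : Type*} [NormedAddCommGroup H] [InnerProductSpace ℂ H] [CompleteSpace H]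
    (T : H →L[ℂ] H) (hT : T.IsPositive)
    (S : Set H) (hS1 : ∀ ξ ∈ S, ‖ξ‖ = 1)
    (hSsep : ∀ A : H →L[ℂ] H, (∀ ξ ∈ S, A ξ = 0) → A = 0)
    (μ : H → Measure ℝ) (hfin : ∀ ξ, IsFiniteMeasure (μ ξ))
    -- each μ ξ is the spectral measure of T at ξ : supported on [0, ‖T‖] with
    -- ⟨ξ, f(T) ξ⟩ = ∫ f dμ_ξ for bounded Borel f, in particular for the powers
    (hsupp : ∀ ξ ∈ S, (μ ξ) (Set.Icc 0 ‖T‖)ᶜ = 0)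
    (hmom : ∀ ξ ∈ S, ∀ n : ℕ, (inner ℂ ξ ((T ^ n) ξ) : ℂ).re = ∫ x, x ^ n ∂(μ ξ)) :
    spectrum ℝ T ⊆ closure (⋃ ξ ∈ S, measureSupport (μ ξ)) :=
  spectrum_subset_closure_iUnion_support_general T hT S hSsep μ hfin hsupp hmom
end

section
/- Let G be a locally compact group, ρ a unitary representation of G on a Hilbert space H(ρ) possessing a separating set P of norm-one G-positive vectors (a vector ξ is G-positive if ⟨ξ, ρ(s)ξ⟩ ≥ 0 for all s ∈ G), and let π be any unitary representation of G on H(π). Then for every probability measure μ on G, ‖(ρ⊗π)(μ)‖ ≤ ‖ρ(μ)‖. -/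
/-!
Put `S = Tτ† Tτ` and `R = Tρ† Tρ`. For a unitary representation `σ` with `T = σ(μ)`, the matrix
coefficients of `T† T` are double averages, `⟪x, σ g (T† T y)⟫ = ∫∫ ⟪x, σ (g s⁻¹ t) y⟫ dμ(s) dμ(t)`.
For `ξ ∈ P` the coefficient `⟪ξ ⊗ η, τ(·)(ξ ⊗ η)⟫ = ⟪ξ, ρ(·)ξ⟫ ⟪η, π(·)η⟫` is dominated in modulus
by the nonnegative function `‖η‖² ⟪ξ, ρ(·)ξ⟫`, and averaging preserves this domination, so by
induction `|⟪ξ ⊗ η, Sⁿ (ξ ⊗ η)⟫| ≤ ‖η‖² ⟪ξ, Rⁿ ξ⟫ ≤ ‖ξ‖² ‖η‖² ‖R‖ⁿ`, i.e.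
`‖Sⁿ (ξ ⊗ η)‖ ≤ ‖ξ‖ ‖η‖ ‖R‖ⁿ`. Since `P` is separating, these vectors span a dense subspace, and
for a self-adjoint `S` the bound `‖Sⁿ v‖ = O(‖R‖ⁿ)` forces `‖S v‖ ≤ ‖R‖ ‖v‖`, because
`‖S v‖^(2^k) ‖v‖ ≤ ‖v‖^(2^k) ‖S^(2^k) v‖`. Hence `‖Tτ‖² = ‖S‖ ≤ ‖R‖ = ‖Tρ‖²`.
-/

open MeasureTheory ContinuousLinearMap Submodule
open scoped ComplexOrder InnerProductSpace InnerProduct ComplexConjugate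

theorem le_of_forall_pow_two_pow_le_mul_pow {a b K : ℝ} (hb : 0 ≤ b)
    (h : ∀ k : ℕ, a ^ 2 ^ k ≤ K * b ^ 2 ^ k) : a ≤ b := by
  by_contra! hba
  obtain rfl | hb := hb.eq_or_lt
  · simpa [hba.not_ge] using h 0
  have hr : 1 < a / b := (one_lt_div hb).2 hba
  obtain ⟨k, hk⟩ := pow_unbounded_of_one_lt K hr
  have hK : (a / b) ^ 2 ^ k ≤ K := by
    rw [div_pow, div_le_iff₀ (by positivity)]
    exact h k
  exact (hk.trans_le ((pow_le_pow_right₀ hr.le k.lt_two_pow_self.le).trans hK)).false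

section PowGrowth

variable {𝕜 E : Type*}

def powGrowthSubmodule [NormedField 𝕜] [SeminormedAddCommGroup E] [NormedSpace 𝕜 E]
    (S : E →L[𝕜] E) (C : ℝ) : Submodule 𝕜 E where
  carrier := {v | ∃ K, ∀ n : ℕ, ‖(S ^ n) v‖ ≤ K * C ^ n}
  zero_mem' := ⟨0, fun n => by simp⟩
  add_mem' := by
    rintro v w ⟨K, hK⟩ ⟨L, hL⟩
    refine ⟨K + L, fun n => ?_⟩
    rw [map_add, add_mul]
    exact (norm_add_le _ _).trans (add_le_add (hK n) (hL n))
  smul_mem' := by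
    rintro a v ⟨K, hK⟩
    refine ⟨‖a‖ * K, fun n => ?_⟩
    rw [map_smul, norm_smul, mul_assoc]
    exact mul_le_mul_of_nonneg_left (hK n) (norm_nonneg a)

theorem ContinuousLinearMap.norm_pow_apply_le [NontriviallyNormedField 𝕜]
    [SeminormedAddCommGroup E] [NormedSpace 𝕜 E] (A : E →L[𝕜] E) (n : ℕ) (x : E) :
    ‖(A ^ n) x‖ ≤ ‖A‖ ^ n * ‖x‖ := by
  induction n with
  | zero => simp
  | succ n ih =>
    rw [pow_succ', mul_apply_eq_comp, pow_succ', mul_assoc]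
    exact (A.le_opNorm _).trans (mul_le_mul_of_nonneg_left ih (norm_nonneg A))

variable [RCLike 𝕜] [NormedAddCommGroup E] [InnerProductSpace 𝕜 E] [CompleteSpace E]
  {S : E →L[𝕜] E}

theorem IsSelfAdjoint.norm_pow_apply_sq (hS : IsSelfAdjoint S) (n : ℕ) (v : E) :
    ‖(S ^ n) v‖ ^ 2 = ‖⟪v, (S ^ (n + n)) v⟫_𝕜‖ := by
  rw [pow_add, mul_apply_eq_comp, ← adjoint_inner_left, (hS.pow n).adjoint_eq,
    inner_self_eq_norm_sq_to_K, norm_pow, RCLike.norm_ofReal, abs_norm]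

theorem IsSelfAdjoint.norm_apply_pow_two_pow_mul_le (hS : IsSelfAdjoint S) (v : E) (k : ℕ) :
    ‖S v‖ ^ 2 ^ k * ‖v‖ ≤ ‖v‖ ^ 2 ^ k * ‖(S ^ 2 ^ k) v‖ := by
  rcases eq_or_ne v 0 with rfl | hv
  · simp
  have hv : 0 < ‖v‖ := norm_pos_iff.2 hv
  induction k with
  | zero => simp [mul_comm]
  | succ k ih =>
    have hsq : ‖(S ^ 2 ^ k) v‖ ^ 2 ≤ ‖v‖ * ‖(S ^ 2 ^ (k + 1)) v‖ := by
      rw [hS.norm_pow_apply_sq, ← two_mul, ← pow_succ']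
      exact norm_inner_le_norm _ _
    refine le_of_mul_le_mul_right ?_ hv
    calc ‖S v‖ ^ 2 ^ (k + 1) * ‖v‖ * ‖v‖ = (‖S v‖ ^ 2 ^ k * ‖v‖) ^ 2 := by ring
      _ ≤ (‖v‖ ^ 2 ^ k * ‖(S ^ 2 ^ k) v‖) ^ 2 := by gcongr
      _ = ‖v‖ ^ 2 ^ (k + 1) * ‖(S ^ 2 ^ k) v‖ ^ 2 := by ring
      _ ≤ ‖v‖ ^ 2 ^ (k + 1) * (‖v‖ * ‖(S ^ 2 ^ (k + 1)) v‖) := by gcongr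
      _ = ‖v‖ ^ 2 ^ (k + 1) * ‖(S ^ 2 ^ (k + 1)) v‖ * ‖v‖ := by ring

theorem IsSelfAdjoint.norm_apply_le_of_mem_powGrowthSubmodule (hS : IsSelfAdjoint S) {C : ℝ}
    (hC : 0 ≤ C) {v : E} (hv : v ∈ powGrowthSubmodule S C) : ‖S v‖ ≤ C * ‖v‖ := by
  obtain ⟨K, hK⟩ := hv
  rcases eq_or_ne v 0 with rfl | hv
  · simp
  have hv : 0 < ‖v‖ := norm_pos_iff.2 hv
  refine le_of_forall_pow_two_pow_le_mul_pow (K := K / ‖v‖) (by positivity) fun k => ?_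
  rw [div_mul_eq_mul_div, le_div_iff₀ hv]
  calc ‖S v‖ ^ 2 ^ k * ‖v‖ ≤ ‖v‖ ^ 2 ^ k * ‖(S ^ 2 ^ k) v‖ :=
        hS.norm_apply_pow_two_pow_mul_le v k
    _ ≤ ‖v‖ ^ 2 ^ k * (K * C ^ 2 ^ k) := by gcongr; exact hK _
    _ = K * (C * ‖v‖) ^ 2 ^ k := by ring

theorem IsSelfAdjoint.opNorm_le_of_dense_powGrowthSubmodule (hS : IsSelfAdjoint S) {C : ℝ}
    (hC : 0 ≤ C) (hd : Dense (powGrowthSubmodule S C : Set E)) : ‖S‖ ≤ C :=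
  S.opNorm_le_bound hC fun v => hd.induction
    (fun _ hw => hS.norm_apply_le_of_mem_powGrowthSubmodule hC hw)
    (isClosed_le (continuous_norm.comp S.continuous) (continuous_const.mul continuous_norm)) v

end PowGrowth

section Density

variable {𝕜 E : Type*}

theorem dense_span_of_separating [RCLike 𝕜] [NormedAddCommGroup E]
    [InnerProductSpace 𝕜 E] [CompleteSpace E] {P : Set E}
    (hP : ∀ A : E →L[𝕜] E, (∀ ξ ∈ P, A ξ = 0) → A = 0) : Dense (span 𝕜 P : Set E) := by
  set K := (span 𝕜 P).topologicalClosure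
  have hK : K.starProjection = 1 := (sub_eq_zero.1 <| hP _ fun ξ hξ => by
    simp [K.starProjection_eq_self_iff.2 (le_topologicalClosure _ (subset_span hξ))]).symm
  rw [dense_iff_topologicalClosure_eq_top, eq_top_iff]
  intro x _
  rw [← K.starProjection_eq_self_iff, hK, one_apply_eq_self]

theorem ContinuousLinearMap.ext_inner_of_dense_span [RCLike 𝕜] [NormedAddCommGroup E]
    [InnerProductSpace 𝕜 E] {s : Set E} (hs : Dense (span 𝕜 s : Set E)) {A B : E →L[𝕜] E}
    (h : ∀ x ∈ s, ∀ y ∈ s, ⟪x, A y⟫_𝕜 = ⟪x, B y⟫_𝕜) : A = B := by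
  refine ext_on hs fun y hy => ext_inner_left 𝕜 fun x => ?_
  have : innerSLFlip 𝕜 (A y) = innerSLFlip 𝕜 (B y) := ext_on hs fun x hx => h x hx y hy
  simpa using congr($this x)

variable {F G : Type*} [NontriviallyNormedField 𝕜] [SeminormedAddCommGroup E] [NormedSpace 𝕜 E]
  [SeminormedAddCommGroup F] [NormedSpace 𝕜 F] [SeminormedAddCommGroup G] [NormedSpace 𝕜 G]

theorem dense_of_forall_apply_mem (f : E →L[𝕜] F →L[𝕜] G)
    (hf : Dense (span 𝕜 (Set.range fun v : E × F => f v.1 v.2) : Set G)) {s : Set E}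
    (hs : Dense (span 𝕜 s : Set E)) {V : Submodule 𝕜 G} (hV : ∀ x ∈ s, ∀ y, f x y ∈ V) :
    Dense (V : Set G) := by
  have hM : ∀ x y, f x y ∈ V.topologicalClosure := fun x y =>
    hs.induction (P := fun x => f x y ∈ V.topologicalClosure)
      (span_le.2 fun x hx => V.le_topologicalClosure (hV x hx y) :
        span 𝕜 s ≤ V.topologicalClosure.comap (f.flip y : E →ₗ[𝕜] G))
      (V.isClosed_topologicalClosure.preimage (f.flip y).continuous) x
  intro z
  rw [← V.topologicalClosure_coe]
  exact hf.induction (span_le.2 (by rintro _ ⟨⟨x, y⟩, rfl⟩; exact hM x y))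
    V.isClosed_topologicalClosure z

end Density

theorem norm_integral_le_re_integral {α : Type*} [MeasurableSpace α] {μ : Measure α}
    {f h : α → ℂ} (hh : Integrable h μ) (hfh : ∀ x, ‖f x‖ ≤ (h x).re) :
    ‖∫ x, f x ∂μ‖ ≤ (∫ x, h x ∂μ).re :=
  (norm_integral_le_of_norm_le hh.re (ae_of_all _ hfh)).trans_eq (integral_re hh)

theorem integrable_inner_of_norm_le {X 𝕜 E : Type*} [TopologicalSpace X] [MeasurableSpace X]
    [OpensMeasurableSpace X] {μ : Measure X} [IsFiniteMeasure μ] [RCLike 𝕜] [NormedAddCommGroup E]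
    [InnerProductSpace 𝕜 E] {u v : X → E} (hu : Continuous u) (hv : Continuous v) {a b : ℝ}
    (hua : ∀ s, ‖u s‖ ≤ a) (hvb : ∀ s, ‖v s‖ ≤ b) : Integrable (fun s => ⟪u s, v s⟫_𝕜) μ :=
  .of_bound (hu.inner hv).aestronglyMeasurable (a * b) <| ae_of_all _ fun s =>
    (norm_inner_le_norm _ _).trans <|
      mul_le_mul (hua s) (hvb s) (norm_nonneg _) ((norm_nonneg _).trans (hua s))

namespace UnitaryRep

variable {G H : Type*} [Group G] [NormedAddCommGroup H] [InnerProductSpace ℂ H] [CompleteSpace H]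
  (σ : G →* (H →L[ℂ] H))

theorem norm_map_apply (hσ : ∀ s, (σ s)† = σ s⁻¹) (s : G) (x : H) : ‖σ s x‖ = ‖x‖ :=
  (norm_map_iff_adjoint_comp_self (σ s)).2
    (by rw [hσ, ← ContinuousLinearMap.mul_def, ← map_mul, inv_mul_cancel, map_one]) x

theorem inner_map_mul_apply (hσ : ∀ s, (σ s)† = σ s⁻¹) (a t : G) (x y : H) :
    ⟪x, σ (a * t) y⟫_ℂ = ⟪σ a⁻¹ x, σ t y⟫_ℂ := by
  rw [map_mul, mul_apply_eq_comp, ← adjoint_inner_left, hσ]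

variable [MeasurableSpace G] {μ : Measure G} {T : H →L[ℂ] H}

theorem integral_inner_map_mul_apply (hσ : ∀ s, (σ s)† = σ s⁻¹)
    (hT : ∀ x y, ⟪x, T y⟫_ℂ = ∫ s, ⟪x, σ s y⟫_ℂ ∂μ) (a : G) (x y : H) :
    ∫ t, ⟪x, σ (a * t) y⟫_ℂ ∂μ = ⟪σ a⁻¹ x, T y⟫_ℂ := by
  simp_rw [inner_map_mul_apply σ hσ, hT]

theorem inner_map_adjoint_comp_self_apply (hσ : ∀ s, (σ s)† = σ s⁻¹)
    (hT : ∀ x y, ⟪x, T y⟫_ℂ = ∫ s, ⟪x, σ s y⟫_ℂ ∂μ) (g : G) (x y : H) :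
    ⟪x, σ g ((T† ∘L T) y)⟫_ℂ = ∫ s, ⟪σ (s * g⁻¹) x, T y⟫_ℂ ∂μ :=
  calc ⟪x, σ g ((T† ∘L T) y)⟫_ℂ = ⟪T (σ g⁻¹ x), T y⟫_ℂ := by
        rw [comp_apply, ← adjoint_inner_left, hσ, adjoint_inner_right]
    _ = conj ⟪T y, T (σ g⁻¹ x)⟫_ℂ := (inner_conj_symm _ _).symm
    _ = ∫ s, conj ⟪T y, σ s (σ g⁻¹ x)⟫_ℂ ∂μ := by rw [hT, integral_conj]
    _ = ∫ s, ⟪σ (s * g⁻¹) x, T y⟫_ℂ ∂μ := by simp_rw [inner_conj_symm, map_mul, mul_apply_eq_comp]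

theorem inner_map_adjoint_comp_self_apply_eq_integral_integral (hσ : ∀ s, (σ s)† = σ s⁻¹)
    (hT : ∀ x y, ⟪x, T y⟫_ℂ = ∫ s, ⟪x, σ s y⟫_ℂ ∂μ) (g : G) (x y : H) :
    ⟪x, σ g ((T† ∘L T) y)⟫_ℂ = ∫ s, ∫ t, ⟪x, σ (g * s⁻¹ * t) y⟫_ℂ ∂μ ∂μ := by
  simp_rw [inner_map_adjoint_comp_self_apply σ hσ hT, integral_inner_map_mul_apply σ hσ hT,
    mul_inv_rev, inv_inv]

variable [TopologicalSpace G] [IsTopologicalGroup G] [OpensMeasurableSpace G] [IsFiniteMeasure μ]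

theorem norm_integral_integral_le_re_inner (hσ : ∀ s, (σ s)† = σ s⁻¹)
    (hσc : ∀ x, Continuous fun s => σ s x) (hT : ∀ x y, ⟪x, T y⟫_ℂ = ∫ s, ⟪x, σ s y⟫_ℂ ∂μ)
    {f : G → ℂ} {K : ℝ} {x y : H} (hf : ∀ u, ‖f u‖ ≤ K * (⟪x, σ u y⟫_ℂ).re) (g : G) :
    ‖∫ s, ∫ t, f (g * s⁻¹ * t) ∂μ ∂μ‖ ≤ K * (⟪x, σ g ((T† ∘L T) y)⟫_ℂ).re := by
  have hinner (s : G) : ‖∫ t, f (g * s⁻¹ * t) ∂μ‖ ≤ ((K : ℂ) * ⟪σ (s * g⁻¹) x, T y⟫_ℂ).re := by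
    have hint : Integrable (fun t => ⟪x, σ (g * s⁻¹ * t) y⟫_ℂ) μ :=
      integrable_inner_of_norm_le continuous_const ((hσc y).comp (continuous_const_mul _))
        (fun _ => le_rfl) (fun t => (norm_map_apply σ hσ _ y).le)
    have := norm_integral_le_re_integral (hint.const_mul K)
      fun t => (hf _).trans_eq (Complex.re_ofReal_mul ..).symm
    rwa [integral_const_mul, integral_inner_map_mul_apply σ hσ hT, mul_inv_rev, inv_inv] at this
  have hint : Integrable (fun s => ⟪σ (s * g⁻¹) x, T y⟫_ℂ) μ :=
    integrable_inner_of_norm_le ((hσc x).comp (continuous_mul_const _)) continuous_const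
      (fun s => (norm_map_apply σ hσ _ x).le) (fun _ => le_rfl)
  have := norm_integral_le_re_integral (hint.const_mul K) hinner
  rwa [integral_const_mul, ← inner_map_adjoint_comp_self_apply σ hσ hT, Complex.re_ofReal_mul]
    at this

end UnitaryRep

section Tensor

variable {G Hρ Hπ Hτ : Type*} [Group G]
  [NormedAddCommGroup Hρ] [InnerProductSpace ℂ Hρ] [CompleteSpace Hρ]
  [NormedAddCommGroup Hπ] [InnerProductSpace ℂ Hπ] [CompleteSpace Hπ]
  [NormedAddCommGroup Hτ] [InnerProductSpace ℂ Hτ] [CompleteSpace Hτ]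
  {ρ : G →* (Hρ →L[ℂ] Hρ)} {π : G →* (Hπ →L[ℂ] Hπ)} {τ : G →* (Hτ →L[ℂ] Hτ)}
  {tp : Hρ →L[ℂ] Hπ →L[ℂ] Hτ}

theorem adjoint_map_eq_map_inv_of_tensor (hρu : ∀ s, (ρ s)† = ρ s⁻¹)
    (hπu : ∀ s, (π s)† = π s⁻¹)
    (htp_inner : ∀ ξ ξ' η η', ⟪tp ξ η, tp ξ' η'⟫_ℂ = ⟪ξ, ξ'⟫_ℂ * ⟪η, η'⟫_ℂ)
    (htp_dense : Dense (span ℂ (Set.range fun v : Hρ × Hπ => tp v.1 v.2) : Set Hτ))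
    (hτ : ∀ s ξ η, τ s (tp ξ η) = tp (ρ s ξ) (π s η)) (s : G) : (τ s)† = τ s⁻¹ := by
  refine ext_inner_of_dense_span htp_dense ?_
  rintro _ ⟨⟨ξ', η'⟩, rfl⟩ _ ⟨⟨ξ, η⟩, rfl⟩
  rw [adjoint_inner_right, hτ, hτ, htp_inner, htp_inner, ← hρu, ← hπu, adjoint_inner_right,
    adjoint_inner_right]

variable [MeasurableSpace G] [TopologicalSpace G] [IsTopologicalGroup G] [OpensMeasurableSpace G]
  {μ : Measure G} [IsFiniteMeasure μ] {Tρ : Hρ →L[ℂ] Hρ} {Tτ : Hτ →L[ℂ] Hτ}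

theorem norm_inner_tensor_map_pow_le (hρu : ∀ s, (ρ s)† = ρ s⁻¹)
    (hρc : ∀ ξ, Continuous fun s => ρ s ξ) (hπu : ∀ s, (π s)† = π s⁻¹)
    (htp_inner : ∀ ξ ξ' η η', ⟪tp ξ η, tp ξ' η'⟫_ℂ = ⟪ξ, ξ'⟫_ℂ * ⟪η, η'⟫_ℂ)
    (hτ : ∀ s ξ η, τ s (tp ξ η) = tp (ρ s ξ) (π s η)) (hτu : ∀ s, (τ s)† = τ s⁻¹)
    (hTρ : ∀ ξ η, ⟪ξ, Tρ η⟫_ℂ = ∫ s, ⟪ξ, ρ s η⟫_ℂ ∂μ)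
    (hTτ : ∀ ξ η, ⟪ξ, Tτ η⟫_ℂ = ∫ s, ⟪ξ, τ s η⟫_ℂ ∂μ)
    {ξ : Hρ} (hξ : ∀ s, 0 ≤ ⟪ξ, ρ s ξ⟫_ℂ) (η : Hπ) (n : ℕ) (u : G) :
    ‖⟪tp ξ η, τ u (((Tτ† ∘L Tτ) ^ n) (tp ξ η))⟫_ℂ‖ ≤
      ‖η‖ ^ 2 * (⟪ξ, ρ u (((Tρ† ∘L Tρ) ^ n) ξ)⟫_ℂ).re := by
  induction n generalizing u with
  | zero =>
    have hre : ‖⟪ξ, ρ u ξ⟫_ℂ‖ = (⟪ξ, ρ u ξ⟫_ℂ).re := by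
      simpa using congrArg Complex.re (Complex.norm_of_nonneg' (hξ u))
    have hπ : ‖⟪η, π u η⟫_ℂ‖ ≤ ‖η‖ ^ 2 :=
      (norm_inner_le_norm _ _).trans_eq (by rw [UnitaryRep.norm_map_apply π hπu, sq])
    calc ‖⟪tp ξ η, τ u (((Tτ† ∘L Tτ) ^ 0) (tp ξ η))⟫_ℂ‖ = ‖⟪η, π u η⟫_ℂ‖ * ‖⟪ξ, ρ u ξ⟫_ℂ‖ := by
          rw [pow_zero, one_apply_eq_self, hτ, htp_inner, norm_mul, mul_comm]
      _ ≤ ‖η‖ ^ 2 * (⟪ξ, ρ u (((Tρ† ∘L Tρ) ^ 0) ξ)⟫_ℂ).re := by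
          rw [hre, pow_zero, one_apply_eq_self]
          gcongr
          exact hre ▸ norm_nonneg _
  | succ n ih =>
    rw [pow_succ', mul_apply_eq_comp,
      UnitaryRep.inner_map_adjoint_comp_self_apply_eq_integral_integral τ hτu hTτ,
      pow_succ' (Tρ† ∘L Tρ), mul_apply_eq_comp]
    exact UnitaryRep.norm_integral_integral_le_re_inner ρ hρu hρc hTρ ih u

theorem norm_pow_apply_tensor_le (hρu : ∀ s, (ρ s)† = ρ s⁻¹)
    (hρc : ∀ ξ, Continuous fun s => ρ s ξ) (hπu : ∀ s, (π s)† = π s⁻¹)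
    (htp_inner : ∀ ξ ξ' η η', ⟪tp ξ η, tp ξ' η'⟫_ℂ = ⟪ξ, ξ'⟫_ℂ * ⟪η, η'⟫_ℂ)
    (hτ : ∀ s ξ η, τ s (tp ξ η) = tp (ρ s ξ) (π s η)) (hτu : ∀ s, (τ s)† = τ s⁻¹)
    (hTρ : ∀ ξ η, ⟪ξ, Tρ η⟫_ℂ = ∫ s, ⟪ξ, ρ s η⟫_ℂ ∂μ)
    (hTτ : ∀ ξ η, ⟪ξ, Tτ η⟫_ℂ = ∫ s, ⟪ξ, τ s η⟫_ℂ ∂μ)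
    {ξ : Hρ} (hξ : ∀ s, 0 ≤ ⟪ξ, ρ s ξ⟫_ℂ) (η : Hπ) (n : ℕ) :
    ‖((Tτ† ∘L Tτ) ^ n) (tp ξ η)‖ ≤ ‖ξ‖ * ‖η‖ * (‖Tρ‖ * ‖Tρ‖) ^ n := by
  have hR := (Tρ† ∘L Tρ).norm_pow_apply_le (n + n) ξ
  rw [norm_adjoint_comp_self] at hR
  have key := norm_inner_tensor_map_pow_le hρu hρc hπu htp_inner hτ hτu hTρ hTτ hξ η (n + n) 1
  simp only [map_one, one_apply_eq_self] at key
  refine (pow_le_pow_iff_left₀ (norm_nonneg _) (by positivity) two_ne_zero).1 ?_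
  calc ‖((Tτ† ∘L Tτ) ^ n) (tp ξ η)‖ ^ 2
      = ‖⟪tp ξ η, ((Tτ† ∘L Tτ) ^ (n + n)) (tp ξ η)⟫_ℂ‖ :=
        (isPositive_adjoint_comp_self Tτ).isSelfAdjoint.norm_pow_apply_sq n _
    _ ≤ ‖η‖ ^ 2 * (⟪ξ, ((Tρ† ∘L Tρ) ^ (n + n)) ξ⟫_ℂ).re := key
    _ ≤ ‖η‖ ^ 2 * (‖ξ‖ * ((‖Tρ‖ * ‖Tρ‖) ^ (n + n) * ‖ξ‖)) := by
        gcongr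
        exact (Complex.re_le_norm _).trans ((norm_inner_le_norm _ _).trans (by gcongr))
    _ = (‖ξ‖ * ‖η‖ * (‖Tρ‖ * ‖Tρ‖) ^ n) ^ 2 := by ring

end Tensor

theorem norm_tensor_integral_le_of_positive_separating_general
    {G : Type*} [Group G] [TopologicalSpace G] [IsTopologicalGroup G]
    [MeasurableSpace G] [BorelSpace G]
    {Hρ Hπ Hτ : Type*}
    [NormedAddCommGroup Hρ] [InnerProductSpace ℂ Hρ] [CompleteSpace Hρ]
    [NormedAddCommGroup Hπ] [InnerProductSpace ℂ Hπ] [CompleteSpace Hπ]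
    [NormedAddCommGroup Hτ] [InnerProductSpace ℂ Hτ] [CompleteSpace Hτ]
    -- ρ is a (strongly continuous) unitary representation
    (ρ : G →* (Hρ →L[ℂ] Hρ))
    (hρu : ∀ s, ContinuousLinearMap.adjoint (ρ s) = ρ s⁻¹)
    (hρc : ∀ ξ : Hρ, Continuous fun s => ρ s ξ)
    -- π is a (strongly continuous) unitary representation
    (π : G →* (Hπ →L[ℂ] Hπ))
    (hπu : ∀ s, ContinuousLinearMap.adjoint (π s) = π s⁻¹)
    -- P is a separating set of norm-one G-positive vectors for ρ
    (P : Set Hρ)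
    (hPsep : ∀ A : Hρ →L[ℂ] Hρ, (∀ ξ ∈ P, A ξ = 0) → A = 0)
    (hPpos : ∀ ξ ∈ P, ∀ s : G, 0 ≤ (inner ℂ ξ ((ρ s) ξ) : ℂ))
    -- Hτ together with tp is the Hilbert space tensor product Hρ ⊗ Hπ
    (tp : Hρ →L[ℂ] Hπ →L[ℂ] Hτ)
    (htp_inner : ∀ (ξ ξ' : Hρ) (η η' : Hπ),
      (inner ℂ (tp ξ η) (tp ξ' η') : ℂ) = (inner ℂ ξ ξ' : ℂ) * (inner ℂ η η' : ℂ))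
    (htp_dense : Dense
      ((Submodule.span ℂ (Set.range fun v : Hρ × Hπ => tp v.1 v.2) : Submodule ℂ Hτ) : Set Hτ))
    -- τ is the tensor product representation ρ ⊗ π
    (τ : G →* (Hτ →L[ℂ] Hτ))
    (hτ : ∀ (s : G) (ξ : Hρ) (η : Hπ), τ s (tp ξ η) = tp (ρ s ξ) (π s η))
    -- μ is a probability measure, and Tρ = ρ(μ), Tτ = (ρ ⊗ π)(μ) as weak integrals
    (μ : Measure G) [IsProbabilityMeasure μ]
    (Tρ : Hρ →L[ℂ] Hρ)
    (hTρ : ∀ ξ η : Hρ, (inner ℂ ξ (Tρ η) : ℂ) = ∫ s, (inner ℂ ξ (ρ s η) : ℂ) ∂μ)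
    (Tτ : Hτ →L[ℂ] Hτ)
    (hTτ : ∀ ξ η : Hτ, (inner ℂ ξ (Tτ η) : ℂ) = ∫ s, (inner ℂ ξ (τ s η) : ℂ) ∂μ) :
    ‖Tτ‖ ≤ ‖Tρ‖ := by
  have hτu := adjoint_map_eq_map_inv_of_tensor hρu hπu htp_inner htp_dense hτ
  have hdense : Dense (powGrowthSubmodule (Tτ† ∘L Tτ) (‖Tρ‖ * ‖Tρ‖) : Set Hτ) :=
    dense_of_forall_apply_mem tp htp_dense (dense_span_of_separating hPsep) fun ξ hξ η =>
      ⟨_, norm_pow_apply_tensor_le hρu hρc hπu htp_inner hτ hτu hTρ hTτ (hPpos ξ hξ) η⟩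
  have hS := (isPositive_adjoint_comp_self Tτ).isSelfAdjoint.opNorm_le_of_dense_powGrowthSubmodule
    (by positivity) hdense
  rw [norm_adjoint_comp_self] at hS
  exact (mul_self_le_mul_self_iff (norm_nonneg _) (norm_nonneg _)).2 hS

/-- If `ρ` is a unitary representation of a locally compact group `G`
possessing a separating set `P` of norm-one `G`-positive vectors, and `π` is any unitary
representation of `G`, then for every probability measure `μ` on `G`,
`‖(ρ ⊗ π)(μ)‖ ≤ ‖ρ(μ)‖`. The Hilbert space tensor product `Hρ ⊗ Hπ` is axiomatized by a
bilinear map `tp` with the characteristic inner product identity and dense span. -/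
theorem norm_tensor_integral_le_of_positive_separating
    {G : Type*} [Group G] [TopologicalSpace G] [IsTopologicalGroup G] [LocallyCompactSpace G]
    [MeasurableSpace G] [BorelSpace G]
    {Hρ Hπ Hτ : Type*}
    [NormedAddCommGroup Hρ] [InnerProductSpace ℂ Hρ] [CompleteSpace Hρ]
    [NormedAddCommGroup Hπ] [InnerProductSpace ℂ Hπ] [CompleteSpace Hπ]
    [NormedAddCommGroup Hτ] [InnerProductSpace ℂ Hτ] [CompleteSpace Hτ]
    -- ρ is a (strongly continuous) unitary representation
    (ρ : G →* (Hρ →L[ℂ] Hρ))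
    (hρu : ∀ s, ContinuousLinearMap.adjoint (ρ s) = ρ s⁻¹)
    (hρc : ∀ ξ : Hρ, Continuous fun s => ρ s ξ)
    -- π is a (strongly continuous) unitary representation
    (π : G →* (Hπ →L[ℂ] Hπ))
    (hπu : ∀ s, ContinuousLinearMap.adjoint (π s) = π s⁻¹)
    (hπc : ∀ ξ : Hπ, Continuous fun s => π s ξ)
    -- P is a separating set of norm-one G-positive vectors for ρ
    (P : Set Hρ) (hP1 : ∀ ξ ∈ P, ‖ξ‖ = 1)
    (hPsep : ∀ A : Hρ →L[ℂ] Hρ, (∀ ξ ∈ P, A ξ = 0) → A = 0)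
    (hPpos : ∀ ξ ∈ P, ∀ s : G, 0 ≤ (inner ℂ ξ ((ρ s) ξ) : ℂ))
    -- Hτ together with tp is the Hilbert space tensor product Hρ ⊗ Hπ
    (tp : Hρ →L[ℂ] Hπ →L[ℂ] Hτ)
    (htp_inner : ∀ (ξ ξ' : Hρ) (η η' : Hπ),
      (inner ℂ (tp ξ η) (tp ξ' η') : ℂ) = (inner ℂ ξ ξ' : ℂ) * (inner ℂ η η' : ℂ))
    (htp_dense : Dense
      ((Submodule.span ℂ (Set.range fun v : Hρ × Hπ => tp v.1 v.2) : Submodule ℂ Hτ) : Set Hτ))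
    -- τ is the tensor product representation ρ ⊗ π
    (τ : G →* (Hτ →L[ℂ] Hτ))
    (hτ : ∀ (s : G) (ξ : Hρ) (η : Hπ), τ s (tp ξ η) = tp (ρ s ξ) (π s η))
    -- μ is a probability measure, and Tρ = ρ(μ), Tτ = (ρ ⊗ π)(μ) as weak integrals
    (μ : Measure G) [IsProbabilityMeasure μ]
    (Tρ : Hρ →L[ℂ] Hρ)
    (hTρ : ∀ ξ η : Hρ, (inner ℂ ξ (Tρ η) : ℂ) = ∫ s, (inner ℂ ξ (ρ s η) : ℂ) ∂μ)
    (Tτ : Hτ →L[ℂ] Hτ)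
    (hTτ : ∀ ξ η : Hτ, (inner ℂ ξ (Tτ η) : ℂ) = ∫ s, (inner ℂ ξ (τ s η) : ℂ) ∂μ) :
    ‖Tτ‖ ≤ ‖Tρ‖ :=
  norm_tensor_integral_le_of_positive_separating_general ρ hρu hρc π hπu P hPsep hPpos tp htp_inner
    htp_dense τ hτ μ Tρ hTρ Tτ hTτ
end

section
/- Let (M, L²(M), J, P) be a standard form of a von Neumann algebra M. Then for any ξ, η ∈ L²(M), |⟨ξ,η⟩|² ≤ ⟨|ξ|,|η|⟩ · ⟨|Jξ|,|Jη|⟩, where |ζ| denotes the positive part in the polar decomposition ζ = u|ζ| with |ζ| ∈ P. -/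
open scoped ComplexOrder

/-- A standard form of a von Neumann algebra `M ⊆ B(H)`: a conjugate-linear isometric
involution `J` and a self-dual cone `P` such that `JMJ = M′`, `JcJ = c*` for central `c`,
`Jξ = ξ` for `ξ ∈ P`, and `xJxJ(P) ⊆ P` for `x ∈ M`; together with the polar decomposition
`ξ = u·|ξ|` (with `|ξ| ∈ P` and `u` a partial isometry in `M` with `u*ξ = |ξ|`). -/
structure StandardForm {H : Type*} [NormedAddCommGroup H] [InnerProductSpace ℂ H]
    [CompleteSpace H] (M : VonNeumannAlgebra H) where
  J : H ≃ₗᵢ⋆[ℂ] H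
  P : Set H
  J_involutive : ∀ ξ : H, J (J ξ) = ξ
  selfDual : ∀ ξ : H, ξ ∈ P ↔ ∀ η ∈ P, 0 ≤ (inner ℂ ξ η : ℂ)
  J_fix : ∀ ξ ∈ P, J ξ = ξ
  JMJ_commutant : ∀ x ∈ M, ∃ y ∈ M.commutant, ∀ ξ : H, J (x (J ξ)) = y ξ
  commutant_JMJ : ∀ y ∈ M.commutant, ∃ x ∈ M, ∀ ξ : H, J (x (J ξ)) = y ξ
  J_central : ∀ c ∈ M, c ∈ M.commutant →
    ∀ ξ : H, J (c (J ξ)) = (ContinuousLinearMap.adjoint c) ξ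
  cone_stable : ∀ x ∈ M, ∀ ξ ∈ P, x (J (x (J ξ))) ∈ P
  /-- `absV ξ = |ξ|`, the positive part in the polar decomposition of `ξ`. -/
  absV : H → H
  absV_mem : ∀ ξ : H, absV ξ ∈ P
  polar : ∀ ξ : H, ∃ u : H →L[ℂ] H, u ∈ M ∧ (∀ η, ‖u η‖ ≤ ‖η‖) ∧
    ξ = u (absV ξ) ∧ (ContinuousLinearMap.adjoint u) ξ = absV ξ

/-!
Write `ξ = u|ξ|`, `η = v|η|` and `w = v*u ∈ M`. Positivity of `⟪x J x J |ξ|, |η|⟫` for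
`x = w + c` (`c ∈ ℂ`) is the quadratic inequality
`0 ≤ Re⟪|Jη|, |Jξ|⟫ + 2 Re (c ⟪ξ, η⟫) + |c|² Re⟪|ξ|, |η|⟫`, whose discriminant is the claim.
Its constant term is identified through `u (Jξ) = |Jξ|`: the vector `u Jξ = u J u J |ξ|` lies in
`P` and is fixed by `u*u`, which commutes with `J u J`; and a cone vector `ζ' = a ζ` with
`a* ζ' = ζ` equals `ζ`, by the same positivity for `x = a - 1`.
-/

open scoped InnerProductSpace ComplexConjugate

theorem LinearIsometry.inner_map_map_of_antilinear {E F : Type*} [NormedAddCommGroup E]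
    [InnerProductSpace ℂ E] [NormedAddCommGroup F] [InnerProductSpace ℂ F]
    (f : E →ₗᵢ⋆[ℂ] F) (x y : E) : ⟪f x, f y⟫_ℂ = ⟪y, x⟫_ℂ := by
  have h₁ : f x - Complex.I • f y = f (x + Complex.I • y) := by
    rw [map_add, map_smulₛₗ, Complex.conj_I, neg_smul, sub_eq_add_neg]
  have h₂ : f x + Complex.I • f y = f (x - Complex.I • y) := by
    rw [map_sub, map_smulₛₗ, Complex.conj_I, neg_smul, sub_neg_eq_add]
  have hI : (RCLike.I : ℂ) = Complex.I := rfl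
  rw [← inner_conj_symm y x]
  apply Complex.ext
  · rw [Complex.conj_re, ← RCLike.re_to_complex, ← RCLike.re_to_complex,
      re_inner_eq_norm_add_mul_self_sub_norm_sub_mul_self_div_four,
      re_inner_eq_norm_add_mul_self_sub_norm_sub_mul_self_div_four, ← map_add, ← map_sub,
      f.norm_map, f.norm_map]
  · rw [Complex.conj_im, ← RCLike.im_to_complex, ← RCLike.im_to_complex,
      im_inner_eq_norm_sub_i_smul_mul_self_sub_norm_add_i_smul_mul_self_div_four,
      im_inner_eq_norm_sub_i_smul_mul_self_sub_norm_add_i_smul_mul_self_div_four]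
    simp only [hI, h₁, h₂, f.norm_map]
    ring

theorem Complex.normSq_le_mul_of_forall_nonneg {z : ℂ} {F G : ℝ} (hF : 0 ≤ F)
    (h : ∀ c : ℂ, 0 ≤ G + 2 * (c * z).re + normSq c * F) : normSq z ≤ F * G := by
  have hquad : ∀ t : ℝ, 0 ≤ normSq z * F * (t * t) + -2 * normSq z * t + G := by
    intro t
    have ht := h (-t * conj z)
    rw [mul_assoc, ← Complex.normSq_eq_conj_mul_self, Complex.normSq_mul, Complex.normSq_neg,
      Complex.normSq_conj, Complex.normSq_ofReal, ← Complex.ofReal_neg, ← Complex.ofReal_mul,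
      Complex.ofReal_re] at ht
    linarith
  have hdisc := discrim_le_zero hquad
  rw [discrim] at hdisc
  rcases (normSq_nonneg z).eq_or_lt with hz | hz
  · rw [← hz]
    exact mul_nonneg hF (by simpa using h 0)
  · nlinarith

theorem VonNeumannAlgebra.adjoint_mem {H : Type*} [NormedAddCommGroup H]
    [InnerProductSpace ℂ H] [CompleteSpace H] {M : VonNeumannAlgebra H} {a : H →L[ℂ] H}
    (ha : a ∈ M) : ContinuousLinearMap.adjoint a ∈ M :=
  ContinuousLinearMap.star_eq_adjoint a ▸ star_mem ha

namespace StandardForm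

variable {H : Type*} [NormedAddCommGroup H] [InnerProductSpace ℂ H] [CompleteSpace H]
  {M : VonNeumannAlgebra H} (sf : StandardForm M)

open ContinuousLinearMap

theorem inner_J_J (x y : H) : ⟪sf.J x, sf.J y⟫_ℂ = ⟪y, x⟫_ℂ :=
  sf.J.toLinearIsometry.inner_map_map_of_antilinear x y

theorem inner_J_left (x y : H) : ⟪sf.J x, y⟫_ℂ = ⟪sf.J y, x⟫_ℂ := by
  conv_lhs => rw [← sf.J_involutive y]
  exact sf.inner_J_J x (sf.J y)

theorem J_absV (ξ : H) : sf.J (sf.absV ξ) = sf.absV ξ :=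
  sf.J_fix _ (sf.absV_mem ξ)

theorem re_inner_nonneg_of_mem {ζ ρ : H} (hζ : ζ ∈ sf.P) (hρ : ρ ∈ sf.P) :
    0 ≤ (⟪ζ, ρ⟫_ℂ).re :=
  (Complex.nonneg_iff.mp ((sf.selfDual ζ).mp hζ ρ hρ)).1

theorem apply_J_apply_J_comm {a x : H →L[ℂ] H} (ha : a ∈ M) (hx : x ∈ M) (ζ : H) :
    a (sf.J (x (sf.J ζ))) = sf.J (x (sf.J (a ζ))) := by
  obtain ⟨y, hy, hJxJ⟩ := sf.JMJ_commutant x hx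
  rw [hJxJ, hJxJ]
  exact DFunLike.congr_fun (VonNeumannAlgebra.mem_commutant_iff.mp hy a ha) ζ

theorem re_inner_quadratic_nonneg {w : H →L[ℂ] H} (hw : w ∈ M) {A B : H} (hA : A ∈ sf.P)
    (hB : B ∈ sf.P) (c : ℂ) :
    0 ≤ (⟪w (sf.J (w A)), B⟫_ℂ).re + 2 * (c * ⟪w A, B⟫_ℂ).re +
      Complex.normSq c * (⟪A, B⟫_ℂ).re := by
  have hx : w + c • (1 : H →L[ℂ] H) ∈ M :=
    add_mem hw (M.toStarSubalgebra.smul_mem (one_mem M) c)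
  have hpos := sf.re_inner_nonneg_of_mem (sf.cone_stable _ hx A hA) hB
  have hJA : sf.J A = A := sf.J_fix A hA
  have hexp : (w + c • (1 : H →L[ℂ] H)) (sf.J ((w + c • (1 : H →L[ℂ] H)) (sf.J A))) =
      w (sf.J (w A)) + conj c • w A + c • sf.J (w A) + (conj c * c) • A := by
    simp only [hJA, add_apply, smul_apply, one_apply_eq_self, map_add, map_smulₛₗ,
      RingHom.id_apply, smul_add, smul_smul]
    abel
  have hJwA : ⟪sf.J (w A), B⟫_ℂ = conj ⟪w A, B⟫_ℂ := by
    rw [sf.inner_J_left, sf.J_fix B hB, inner_conj_symm]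
  rw [hexp, inner_add_left, inner_add_left, inner_add_left, inner_smul_left, inner_smul_left,
    inner_smul_left, hJwA, Complex.conj_conj, ← map_mul,
    ← Complex.normSq_eq_conj_mul_self, Complex.conj_ofReal] at hpos
  simp only [Complex.add_re, Complex.conj_re, Complex.re_ofReal_mul] at hpos
  linarith

theorem eq_of_apply_eq_of_adjoint_apply_eq {a : H →L[ℂ] H} (ha : a ∈ M) {ζ ζ' : H}
    (hζ : ζ ∈ sf.P) (hζ' : ζ' ∈ sf.P) (h : a ζ = ζ') (h' : adjoint a ζ' = ζ) : ζ' = ζ := by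
  have hpos := sf.re_inner_quadratic_nonneg ha hζ hζ' (-1)
  have hself : ⟪a ζ, ζ'⟫_ℂ = ⟪ζ, ζ⟫_ℂ := by rw [← adjoint_inner_right, h']
  have hcross : ⟪a (sf.J (a ζ)), ζ'⟫_ℂ = ⟪ζ', ζ⟫_ℂ := by
    rw [h, sf.J_fix ζ' hζ', ← adjoint_inner_right, h']
  rw [hcross, hself, Complex.normSq_neg, Complex.normSq_one, neg_one_mul, Complex.neg_re] at hpos
  have hsymm : (⟪ζ', ζ⟫_ℂ).re = (⟪ζ, ζ'⟫_ℂ).re := by rw [← inner_conj_symm, Complex.conj_re]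
  have hself' : (⟪ζ', ζ'⟫_ℂ).re = (⟪ζ, ζ⟫_ℂ).re := by rw [← hself, h]
  have hdist := norm_sub_sq (𝕜 := ℂ) ζ' ζ
  have hnorm := inner_self_eq_norm_sq (𝕜 := ℂ) ζ
  have hnorm' := inner_self_eq_norm_sq (𝕜 := ℂ) ζ'
  simp only [RCLike.re_to_complex] at hdist hnorm hnorm'
  have hzero : ‖ζ' - ζ‖ ^ 2 = 0 := le_antisymm (by linarith) (sq_nonneg _)
  simpa [sub_eq_zero] using hzero

structure IsPolarFactor (ξ : H) (u : H →L[ℂ] H) : Prop where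
  mem : u ∈ M
  apply_absV : u (sf.absV ξ) = ξ
  adjoint_apply : adjoint u ξ = sf.absV ξ

theorem exists_isPolarFactor (ξ : H) : ∃ u, sf.IsPolarFactor ξ u := by
  obtain ⟨u, hu, -, h, h'⟩ := sf.polar ξ
  exact ⟨u, hu, h.symm, h'⟩

variable {sf}

theorem IsPolarFactor.apply_J {ξ : H} {u : H →L[ℂ] H} (hu : sf.IsPolarFactor ξ u) :
    u (sf.J ξ) = sf.absV (sf.J ξ) := by
  obtain ⟨p, hp⟩ := sf.exists_isPolarFactor (sf.J ξ)
  have hmem : u (sf.J ξ) ∈ sf.P := by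
    simpa only [sf.J_absV, hu.apply_absV] using
      sf.cone_stable u hu.mem (sf.absV ξ) (sf.absV_mem ξ)
  have hfix : adjoint u (u (sf.J ξ)) = sf.J ξ := by
    simpa only [mul_apply_eq_comp, sf.J_absV, hu.apply_absV, hu.adjoint_apply] using
      sf.apply_J_apply_J_comm (mul_mem (VonNeumannAlgebra.adjoint_mem hu.mem) hu.mem) hu.mem
        (sf.absV ξ)
  refine sf.eq_of_apply_eq_of_adjoint_apply_eq (mul_mem hu.mem hp.mem) (sf.absV_mem _) hmem
    ?_ ?_
  · rw [mul_apply_eq_comp, hp.apply_absV]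
  · change adjoint (u ∘L p) _ = _
    rw [adjoint_comp, comp_apply, hfix, hp.adjoint_apply]

theorem IsPolarFactor.inner_adjoint_mul_absV {ξ η : H} {u v : H →L[ℂ] H}
    (hu : sf.IsPolarFactor ξ u) (hv : sf.IsPolarFactor η v) :
    ⟪(adjoint v * u) (sf.absV ξ), sf.absV η⟫_ℂ = ⟪ξ, η⟫_ℂ := by
  rw [mul_apply_eq_comp, hu.apply_absV, adjoint_inner_left, hv.apply_absV]

theorem IsPolarFactor.inner_adjoint_mul_J {ξ η : H} {u v : H →L[ℂ] H}
    (hu : sf.IsPolarFactor ξ u) (hv : sf.IsPolarFactor η v) :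
    ⟪(adjoint v * u) (sf.J ((adjoint v * u) (sf.absV ξ))), sf.absV η⟫_ℂ =
      ⟪sf.absV (sf.J η), sf.absV (sf.J ξ)⟫_ℂ := by
  have hcomm := sf.apply_J_apply_J_comm hu.mem (VonNeumannAlgebra.adjoint_mem hv.mem) (sf.J ξ)
  rw [sf.J_involutive, hu.apply_J, sf.J_absV] at hcomm
  simp only [mul_apply_eq_comp, hu.apply_absV]
  rw [hcomm, adjoint_inner_left, hv.apply_absV, sf.inner_J_left, ← hv.apply_J,
    adjoint_inner_right]

end StandardForm

/-- In a standard form of a von Neumann algebra `M`, for any `ξ, η ∈ L²(M)` one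
has `|⟨ξ,η⟩|² ≤ ⟨|ξ|,|η|⟩ · ⟨|Jξ|,|Jη|⟩`. -/
theorem abs_inner_sq_le_inner_abs_mul_inner_abs_J
    {H : Type*} [NormedAddCommGroup H] [InnerProductSpace ℂ H] [CompleteSpace H]
    (M : VonNeumannAlgebra H) (sf : StandardForm M) (ξ η : H) :
    ‖(inner ℂ ξ η : ℂ)‖ ^ 2 ≤
      (inner ℂ (sf.absV ξ) (sf.absV η) : ℂ).re *
        (inner ℂ (sf.absV (sf.J ξ)) (sf.absV (sf.J η)) : ℂ).re := by
  obtain ⟨u, hu⟩ := sf.exists_isPolarFactor ξ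
  obtain ⟨v, hv⟩ := sf.exists_isPolarFactor η
  have hw := mul_mem (VonNeumannAlgebra.adjoint_mem hv.mem) hu.mem
  have hquad := sf.re_inner_quadratic_nonneg hw (sf.absV_mem ξ) (sf.absV_mem η)
  rw [hu.inner_adjoint_mul_J hv, hu.inner_adjoint_mul_absV hv] at hquad
  rw [Complex.sq_norm, ← inner_conj_symm (sf.absV (sf.J ξ)), Complex.conj_re]
  exact Complex.normSq_le_mul_of_forall_nonneg
    (sf.re_inner_nonneg_of_mem (sf.absV_mem ξ) (sf.absV_mem η)) hquad
end

section
/- Let B be a finite factor with tracial state τ, let G = U(B) be its unitary group (discrete), acting on A = B(L²(B)) by α_U = Ad U, with π_A^α and π_B^α the canonical implementing representations. If for every finite subset {U₁,…,U_n} of U(B) one has ‖Σᵢ Uᵢ ⊗ Ūᵢ‖ = n, then there exists a hypertrace for B, i.e., a state ψ on B(L²(B)) invariant under Ad U for all U ∈ U(B). -/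
open scoped ComplexOrder

/-!
Each `W U = U ⊗ Ū` is a contraction and `W 1 = 1`. If `‖∑ᵢ W Uᵢ‖ = n`, then for any finite set of
unitaries of `B` (together with `1`) there are unit vectors `v` of `L²(B) ⊗ conj L²(B)` that are
almost invariant under every `W Uᵢ`. By density, these vectors may be taken to be finite sums
`v = ∑ⱼ ξⱼ ⊗ η̄ⱼ`. For such `v`, the vector state `φ_v a = ⟪v, (a ⊗ 1) v⟫` satisfies
`|φ_v (U a U*) - φ_v a| ≤ 2 ‖a‖ ‖W U* v - v‖`, so any pointwise limit of these states along an
ultrafilter is a hypertrace.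
-/

open scoped InnerProductSpace
open Filter Topology

section AlmostInvariant

variable {𝕜 E ι : Type*}

theorem norm_sum_add_two_mul_le [SeminormedAddCommGroup E] {s : Finset ι} (x : ι → E) {r : ℝ}
    (hx : ∀ j ∈ s, ‖x j‖ ≤ r) {i k : ι} (hi : i ∈ s) (hk : k ∈ s) (hik : i ≠ k) :
    ‖∑ j ∈ s, x j‖ + 2 * r ≤ ‖x i + x k‖ + s.card * r := by
  classical
  set s' := (s.erase i).erase k
  have hk' : k ∈ s.erase i := Finset.mem_erase.2 ⟨hik.symm, hk⟩
  have hx_split : ∑ j ∈ s, x j = (x i + x k) + ∑ j ∈ s', x j := by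
    rw [← Finset.add_sum_erase s x hi, ← Finset.add_sum_erase _ x hk', add_assoc]
  have hrest : ∑ j ∈ s', ‖x j‖ ≤ ∑ j ∈ s', r := Finset.sum_le_sum fun j hj =>
    hx j (Finset.mem_of_mem_erase (Finset.mem_of_mem_erase hj))
  have hr_split : ∑ j ∈ s, r = (r + r) + ∑ j ∈ s', r := by
    rw [← Finset.add_sum_erase s (fun _ => r) hi, ← Finset.add_sum_erase _ (fun _ => r) hk',
      add_assoc]
  rw [Finset.sum_const, nsmul_eq_mul] at hr_split
  calc ‖∑ j ∈ s, x j‖ + 2 * r ≤ ‖x i + x k‖ + ∑ j ∈ s', ‖x j‖ + 2 * r := by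
        gcongr
        rw [hx_split]
        exact (norm_add_le _ _).trans (by gcongr; exact norm_sum_le _ _)
    _ ≤ ‖x i + x k‖ + s.card * r := by linarith

variable [RCLike 𝕜] [NormedAddCommGroup E] [InnerProductSpace 𝕜 E]

theorem norm_apply_sub_sq_le_of_norm_sum_ge (T : ι → E →L[𝕜] E) {s : Finset ι}
    (hT : ∀ i ∈ s, ‖T i‖ ≤ 1) {i₀ : ι} (hi₀ : i₀ ∈ s) (hT₀ : T i₀ = 1) {δ : ℝ} (hδ₀ : 0 ≤ δ)
    (hδ₂ : δ ≤ 2) {ξ : E} (hξ : (s.card - δ) * ‖ξ‖ ≤ ‖(∑ i ∈ s, T i) ξ‖) {i : ι} (hi : i ∈ s) :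
    ‖T i ξ - ξ‖ ^ 2 ≤ 4 * δ * ‖ξ‖ ^ 2 := by
  obtain rfl | hne := eq_or_ne i i₀
  · rw [hT₀, one_apply_eq_self, sub_self, norm_zero, sq, zero_mul]
    positivity
  have hTξ : ∀ j ∈ s, ‖T j ξ‖ ≤ ‖ξ‖ := fun j hj =>
    (T j).le_of_opNorm_le (hT j hj) ξ |>.trans_eq (one_mul _)
  have hsum := norm_sum_add_two_mul_le (fun j => T j ξ) hTξ hi hi₀ hne
  rw [← sum_apply, hT₀, one_apply_eq_self] at hsum
  -- the parallelogram law turns this lower bound on `‖T i ξ + ξ‖` into an upper bound on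
  -- `‖T i ξ - ξ‖`
  have hadd : (2 - δ) * ‖ξ‖ ≤ ‖T i ξ + ξ‖ := by linarith
  have hadd_sq : (2 - δ) ^ 2 * ‖ξ‖ ^ 2 ≤ ‖T i ξ + ξ‖ ^ 2 := by
    rw [← mul_pow]; exact pow_le_pow_left₀ (by nlinarith [norm_nonneg ξ]) hadd 2
  have hTi : ‖T i ξ‖ ^ 2 ≤ ‖ξ‖ ^ 2 := pow_le_pow_left₀ (norm_nonneg _) (hTξ i hi) 2
  nlinarith [parallelogram_law_with_norm 𝕜 (T i ξ) ξ, sq_nonneg ‖ξ‖]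

theorem exists_mem_norm_apply_sub_lt (p : Submodule 𝕜 E) (hp : Dense (p : Set E))
    (T : ι → E →L[𝕜] E) {s : Finset ι} (hT : ∀ i ∈ s, ‖T i‖ ≤ 1) {i₀ : ι} (hi₀ : i₀ ∈ s)
    (hT₀ : T i₀ = 1) (hsum : ‖∑ i ∈ s, T i‖ = s.card) {ε : ℝ} (hε : 0 < ε) :
    ∃ ξ ∈ p, ‖ξ‖ = 1 ∧ ∀ i ∈ s, ‖T i ξ - ξ‖ < ε := by
  set δ := min 1 (ε ^ 2 / 8)
  have hδ₀ : 0 < δ := by positivity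
  have hδ₁ : δ ≤ 1 := min_le_left _ _
  have hδε : 4 * δ < ε ^ 2 := by linarith [min_le_right 1 (ε ^ 2 / 8)]
  have hcard : (1 : ℝ) ≤ s.card := by exact_mod_cast Finset.card_pos.2 ⟨i₀, hi₀⟩
  obtain ⟨ξ₀, hξ₀⟩ := (∑ i ∈ s, T i).exists_mul_lt_of_lt_opNorm (r := s.card - δ)
    (by linarith) (by linarith)
  obtain ⟨ζ, hζp, hζ⟩ := hp.exists_mem_open
    (isOpen_lt (f := fun ξ => (s.card - δ) * ‖ξ‖) (g := fun ξ => ‖(∑ i ∈ s, T i) ξ‖)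
      (by fun_prop) (by fun_prop)) ⟨ξ₀, hξ₀⟩
  have hζ₀ : ζ ≠ 0 := by
    rintro rfl
    simp at hζ
  refine ⟨(‖ζ‖⁻¹ : 𝕜) • ζ, p.smul_mem _ hζp, norm_smul_inv_norm hζ₀, fun i hi => ?_⟩
  have hsq := norm_apply_sub_sq_le_of_norm_sum_ge T hT hi₀ hT₀ hδ₀.le (by linarith) hζ.le hi
  have hlt : ‖T i ζ - ζ‖ < ε * ‖ζ‖ :=
    lt_of_pow_lt_pow_left₀ 2 (by positivity) <| by
      rw [mul_pow]
      exact hsq.trans_lt (mul_lt_mul_of_pos_right hδε (by positivity))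
  rw [map_smul, ← smul_sub, norm_smul, norm_inv, RCLike.norm_ofReal, abs_norm]
  rwa [inv_mul_lt_iff₀ (norm_pos_iff.2 hζ₀), mul_comm]

end AlmostInvariant

theorem exists_tendsto_zero_of_forall_finset {X Y : Type*} (G : Set X) (P : Y → Prop)
    (f : X → Y → ℝ) (hf : ∀ x y, 0 ≤ f x y)
    (h : ∀ s : Finset X, ↑s ⊆ G → ∀ ε > 0, ∃ y, P y ∧ ∀ x ∈ s, f x y < ε) :
    ∃ y : Finset X × ℕ → Y, (∀ i, P (y i)) ∧
      ∀ x ∈ G, Tendsto (fun i => f x (y i)) atTop (𝓝 0) := by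
  classical
  choose y hyP hyf using fun i : Finset X × ℕ =>
    h (i.1.filter (· ∈ G)) (fun x hx => (Finset.mem_filter.1 hx).2) (1 / (i.2 + 1))
      Nat.one_div_pos_of_nat
  refine ⟨y, hyP, fun x hx => squeeze_zero' (Eventually.of_forall fun i => hf _ _) ?_
    (tendsto_one_div_add_atTop_nhds_zero_nat.comp
      (tendsto_atTop_atTop_of_monotone (fun _ _ hle => hle.2) fun k => ⟨(∅, k), le_rfl⟩))⟩
  exact eventually_atTop.2 ⟨({x}, 0), fun i hi =>
    (hyf i x (Finset.mem_filter.2 ⟨hi.1 (Finset.mem_singleton_self x), hx⟩)).le⟩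

theorem exists_invariant_state_of_tendsto {A ι : Type*} [NormedRing A] [Module ℂ A] [Star A]
    (l : Filter ι) [l.NeBot] (φ : ι → A →ₗ[ℂ] ℂ) (hφ₁ : ∀ i, φ i 1 = 1)
    (hφ_nonneg : ∀ i a, 0 ≤ φ i (star a * a)) (hφ_le : ∀ i a, ‖φ i a‖ ≤ ‖a‖) (G : Set A)
    (hφ_inv : ∀ U ∈ G, ∀ a, Tendsto (fun i => φ i (U * a * star U) - φ i a) l (𝓝 0)) :
    ∃ ψ : A →ₗ[ℂ] ℂ, ψ 1 = 1 ∧ (∀ a, 0 ≤ ψ (star a * a)) ∧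
      ∀ U ∈ G, ∀ a, ψ (U * a * star U) = ψ a := by
  set 𝒰 := Ultrafilter.of l
  obtain ⟨f, -, hf⟩ := (isCompact_univ_pi fun a : A => isCompact_closedBall (0 : ℂ) ‖a‖)
    |>.ultrafilter_le_nhds (𝒰.map fun i => ⇑(φ i)) <| by
      rw [Ultrafilter.coe_map, le_principal_iff, mem_map]
      exact univ_mem' fun i => Set.mem_univ_pi.2 fun a => mem_closedBall_zero_iff.2 (hφ_le i a)
  rw [Ultrafilter.coe_map] at hf
  have hlim : ∀ a, Tendsto (fun i => φ i a) 𝒰 (𝓝 (f a)) := tendsto_pi_nhds.1 hf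
  refine ⟨linearMapOfTendsto f φ hf, ?_, fun a => ?_, fun U hU a => ?_⟩
  · exact tendsto_nhds_unique (hlim 1) (by simp [hφ₁])
  · exact ge_of_tendsto' (hlim _) fun i => hφ_nonneg i a
  · have h := (hlim a).add ((hφ_inv U hU a).mono_left (Ultrafilter.of_le l))
    simp only [add_sub_cancel, add_zero] at h
    exact tendsto_nhds_unique (hlim _) h

section ConjTensor

variable {H Hτ : Type*} [NormedAddCommGroup H] [InnerProductSpace ℂ H]
  [NormedAddCommGroup Hτ] [InnerProductSpace ℂ Hτ]

/-- `tp ξ η` models the elementary tensor `ξ ⊗ η̄` of `H ⊗ conj H`. -/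
def IsConjTensor (tp : H → H → Hτ) : Prop :=
  ∀ ξ ξ' η η' : H, ⟪tp ξ η, tp ξ' η'⟫_ℂ = ⟪ξ, ξ'⟫_ℂ * ⟪η', η⟫_ℂ

theorem IsConjTensor.smul_left {tp : H → H → Hτ} (htp : IsConjTensor tp) (c : ℂ) (ξ η : H) :
    tp (c • ξ) η = c • tp ξ η := by
  rw [← sub_eq_zero, ← inner_self_eq_zero (𝕜 := ℂ)]
  simp only [inner_sub_left, inner_sub_right, inner_smul_left, inner_smul_right, htp _ _ _ _]
  ring

end ConjTensor

/-- The finite sum `∑ⱼ left j ⊗ (right j)‾`, kept as its legs so that an operator can act on one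
leg at a time. -/
structure FiniteTensor (H : Type*) where
  len : ℕ
  left : Fin len → H
  right : Fin len → H

namespace FiniteTensor

variable {H Hτ : Type*} [NormedAddCommGroup H] [InnerProductSpace ℂ H]
  [NormedAddCommGroup Hτ] [InnerProductSpace ℂ Hτ] {tp : H → H → Hτ}

def eval (tp : H → H → Hτ) (t : FiniteTensor H) : Hτ :=
  ∑ j, tp (t.left j) (t.right j)

def mapLeft (a : H →L[ℂ] H) (t : FiniteTensor H) : FiniteTensor H :=
  ⟨t.len, fun j => a (t.left j), t.right⟩

def map (V : H →L[ℂ] H) (t : FiniteTensor H) : FiniteTensor H :=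
  ⟨t.len, fun j => V (t.left j), fun j => V (t.right j)⟩

/-- The vector state `a ↦ ⟪v, (a ⊗ 1) v⟫` at `v = ∑ⱼ ξⱼ ⊗ η̄ⱼ`, expanded in the inner products
of the legs so that no model of the tensor product is needed. -/
noncomputable def vectorState (t : FiniteTensor H) : (H →L[ℂ] H) →ₗ[ℂ] ℂ where
  toFun a := ∑ j, ∑ k, ⟪t.left j, a (t.left k)⟫_ℂ * ⟪t.right k, t.right j⟫_ℂ
  map_add' a b := by
    simp only [add_apply, inner_add_right, add_mul, Finset.sum_add_distrib]
  map_smul' c a := by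
    simp only [smul_apply, inner_smul_right, mul_assoc, Finset.mul_sum,
      RingHom.id_apply, smul_eq_mul]

theorem inner_eval (htp : IsConjTensor tp) (s t : FiniteTensor H) :
    ⟪s.eval tp, t.eval tp⟫_ℂ = ∑ j, ∑ k, ⟪s.left j, t.left k⟫_ℂ * ⟪t.right k, s.right j⟫_ℂ := by
  simp only [eval, sum_inner, inner_sum, htp _ _ _ _]
  exact Finset.sum_comm

theorem vectorState_eq_inner (htp : IsConjTensor tp) (t : FiniteTensor H) (a : H →L[ℂ] H) :
    t.vectorState a = ⟪t.eval tp, (t.mapLeft a).eval tp⟫_ℂ :=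
  (inner_eval htp t (t.mapLeft a)).symm

theorem vectorState_one (htp : IsConjTensor tp) (t : FiniteTensor H) :
    t.vectorState 1 = (‖t.eval tp‖ : ℂ) ^ 2 := by
  rw [vectorState_eq_inner htp]
  exact inner_self_eq_norm_sq_to_K _

theorem exists_eval_eq_of_mem_span (htp : IsConjTensor tp) {ζ : Hτ}
    (hζ : ζ ∈ Submodule.span ℂ (Set.range fun v : H × H => tp v.1 v.2)) :
    ∃ t : FiniteTensor H, t.eval tp = ζ := by
  obtain ⟨n, c, v, rfl⟩ := Submodule.mem_span_set'.1 hζ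
  choose w hw using fun i => (v i).2
  exact ⟨⟨n, fun i => c i • (w i).1, fun i => (w i).2⟩,
    Finset.sum_congr rfl fun i _ => by rw [htp.smul_left]; exact congrArg (c i • ·) (hw i)⟩

theorem eval_map {W : Hτ →L[ℂ] Hτ} {V : H →L[ℂ] H}
    (hW : ∀ ξ η, W (tp ξ η) = tp (V ξ) (V η)) (t : FiniteTensor H) :
    (t.map V).eval tp = W (t.eval tp) := by
  simp only [eval, map, map_sum, hW]
  rfl

variable [CompleteSpace H]

theorem vectorState_star_mul_self (htp : IsConjTensor tp) (t : FiniteTensor H) (b : H →L[ℂ] H) :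
    t.vectorState (star b * b) = (‖(t.mapLeft b).eval tp‖ : ℂ) ^ 2 := by
  calc t.vectorState (star b * b) = ⟪(t.mapLeft b).eval tp, (t.mapLeft b).eval tp⟫_ℂ := by
        rw [inner_eval htp]
        simp only [vectorState, mapLeft, LinearMap.coe_mk, AddHom.coe_mk, mul_apply_eq_comp,
          ContinuousLinearMap.star_eq_adjoint, ContinuousLinearMap.adjoint_inner_right]
        rfl
    _ = _ := inner_self_eq_norm_sq_to_K _

theorem vectorState_map {V : H →L[ℂ] H} (hV : star V * V = 1) (t : FiniteTensor H)
    (a : H →L[ℂ] H) : t.vectorState (star V * a * V) = (t.map V).vectorState a := by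
  have hVV : ∀ x y, ⟪V x, V y⟫_ℂ = ⟪x, y⟫_ℂ := fun x y => by
    rw [← ContinuousLinearMap.adjoint_inner_right, ← ContinuousLinearMap.star_eq_adjoint,
      ← mul_apply_eq_comp, hV, one_apply_eq_self]
  simp only [vectorState, map, LinearMap.coe_mk, AddHom.coe_mk, mul_apply_eq_comp,
    ContinuousLinearMap.star_eq_adjoint, ContinuousLinearMap.adjoint_inner_right, hVV]
  rfl

theorem vectorState_nonneg (htp : IsConjTensor tp) (t : FiniteTensor H) {x : H →L[ℂ] H}
    (hx : 0 ≤ x) : 0 ≤ t.vectorState x := by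
  obtain ⟨b, rfl⟩ := CStarAlgebra.nonneg_iff_eq_star_mul_self.1 hx
  rw [vectorState_star_mul_self htp]
  exact_mod_cast sq_nonneg ‖(t.mapLeft b).eval tp‖

theorem norm_eval_mapLeft_le (htp : IsConjTensor tp) (t : FiniteTensor H) (a : H →L[ℂ] H) :
    ‖(t.mapLeft a).eval tp‖ ≤ ‖a‖ * ‖t.eval tp‖ := by
  have h : t.vectorState (star a * a) ≤ t.vectorState (algebraMap ℝ _ (‖a‖ ^ 2)) := by
    rw [← sub_nonneg, ← map_sub]
    exact vectorState_nonneg htp t (sub_nonneg.2 CStarAlgebra.star_mul_le_algebraMap_norm_sq)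
  rw [vectorState_star_mul_self htp, Algebra.algebraMap_eq_smul_one, ← Complex.coe_smul,
    map_smul, vectorState_one htp, smul_eq_mul] at h
  have h' : ‖(t.mapLeft a).eval tp‖ ^ 2 ≤ (‖a‖ * ‖t.eval tp‖) ^ 2 := by
    rw [mul_pow]; exact_mod_cast h
  exact le_of_pow_le_pow_left₀ two_ne_zero (by positivity) h'

theorem norm_vectorState_le (htp : IsConjTensor tp) (t : FiniteTensor H) (a : H →L[ℂ] H) :
    ‖t.vectorState a‖ ≤ ‖a‖ * ‖t.eval tp‖ ^ 2 := by
  rw [vectorState_eq_inner htp]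
  calc ‖⟪t.eval tp, (t.mapLeft a).eval tp⟫_ℂ‖ ≤ ‖t.eval tp‖ * ‖(t.mapLeft a).eval tp‖ :=
        norm_inner_le_norm _ _
    _ ≤ ‖t.eval tp‖ * (‖a‖ * ‖t.eval tp‖) := by gcongr; exact norm_eval_mapLeft_le htp t a
    _ = ‖a‖ * ‖t.eval tp‖ ^ 2 := by ring

theorem inner_eval_mapLeft (htp : IsConjTensor tp) (s t : FiniteTensor H) (a : H →L[ℂ] H) :
    ⟪s.eval tp, (t.mapLeft a).eval tp⟫_ℂ = ⟪(s.mapLeft (star a)).eval tp, t.eval tp⟫_ℂ := by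
  simp only [inner_eval htp, mapLeft, ContinuousLinearMap.star_eq_adjoint,
    ContinuousLinearMap.adjoint_inner_left]

theorem norm_vectorState_sub_le (htp : IsConjTensor tp) (s t : FiniteTensor H) (a : H →L[ℂ] H) :
    ‖s.vectorState a - t.vectorState a‖ ≤
      ‖a‖ * (‖s.eval tp‖ + ‖t.eval tp‖) * ‖s.eval tp - t.eval tp‖ := by
  have hsplit : s.vectorState a - t.vectorState a =
      ⟪s.eval tp - t.eval tp, (s.mapLeft a).eval tp⟫_ℂ +
        ⟪(t.mapLeft (star a)).eval tp, s.eval tp - t.eval tp⟫_ℂ := by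
    rw [vectorState_eq_inner htp, vectorState_eq_inner htp, inner_sub_left, inner_sub_right,
      ← inner_eval_mapLeft htp, ← inner_eval_mapLeft htp]
    ring
  rw [hsplit]
  calc _ ≤ ‖s.eval tp - t.eval tp‖ * ‖(s.mapLeft a).eval tp‖ +
        ‖(t.mapLeft (star a)).eval tp‖ * ‖s.eval tp - t.eval tp‖ :=
        (norm_add_le _ _).trans (add_le_add (norm_inner_le_norm _ _) (norm_inner_le_norm _ _))
    _ ≤ ‖s.eval tp - t.eval tp‖ * (‖a‖ * ‖s.eval tp‖) +
        ‖star a‖ * ‖t.eval tp‖ * ‖s.eval tp - t.eval tp‖ := by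
        gcongr <;> exact norm_eval_mapLeft_le htp _ _
    _ = _ := by rw [norm_star]; ring

theorem norm_eval_map (htp : IsConjTensor tp) {V : H →L[ℂ] H} (hV : star V * V = 1)
    (t : FiniteTensor H) : ‖(t.map V).eval tp‖ = ‖t.eval tp‖ := by
  have h := vectorState_map hV t 1
  rw [mul_one, hV, vectorState_one htp, vectorState_one htp] at h
  exact (pow_left_inj₀ (norm_nonneg _) (norm_nonneg _) two_ne_zero).1 (by exact_mod_cast h.symm)

theorem norm_vectorState_conj_sub_le (htp : IsConjTensor tp) {W : Hτ →L[ℂ] Hτ}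
    {V : H →L[ℂ] H} (hW : ∀ ξ η, W (tp ξ η) = tp (V ξ) (V η)) (hV : star V * V = 1)
    {t : FiniteTensor H} (ht : ‖t.eval tp‖ = 1) (a : H →L[ℂ] H) :
    ‖t.vectorState (star V * a * V) - t.vectorState a‖ ≤ 2 * ‖a‖ * ‖W (t.eval tp) - t.eval tp‖ := by
  have h := norm_vectorState_sub_le htp (t.map V) t a
  rwa [norm_eval_map htp hV, ht, eval_map hW, ← vectorState_map hV, one_add_one_eq_two,
    mul_comm ‖a‖] at h

end FiniteTensor

section Hypertrace

variable {H Hτ : Type*} [NormedAddCommGroup H] [InnerProductSpace ℂ H] [CompleteSpace H]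
  [NormedAddCommGroup Hτ] [InnerProductSpace ℂ Hτ] {tp : H → H → Hτ}

theorem opNorm_le_one_of_apply_tensor_eq (htp : IsConjTensor tp)
    (hdense : Dense (Submodule.span ℂ (Set.range fun v : H × H => tp v.1 v.2) : Set Hτ))
    {W : Hτ →L[ℂ] Hτ} {V : H →L[ℂ] H} (hW : ∀ ξ η, W (tp ξ η) = tp (V ξ) (V η))
    (hV : star V * V = 1) : ‖W‖ ≤ 1 := by
  refine W.opNorm_le_bound zero_le_one fun ζ => ?_
  rw [one_mul]
  refine hdense.induction (P := fun ζ => ‖W ζ‖ ≤ ‖ζ‖) (fun ζ hζ => ?_)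
    (isClosed_le (by fun_prop) (by fun_prop)) ζ
  obtain ⟨t, rfl⟩ := FiniteTensor.exists_eval_eq_of_mem_span htp hζ
  rw [← FiniteTensor.eval_map hW, FiniteTensor.norm_eval_map htp hV]

theorem exists_eval_norm_sub_lt (htp : IsConjTensor tp)
    (hdense : Dense (Submodule.span ℂ (Set.range fun v : H × H => tp v.1 v.2) : Set Hτ))
    {G : Set (H →L[ℂ] H)} (hG₁ : 1 ∈ G) (hG : ∀ U ∈ G, star U * U = 1)
    (W : (H →L[ℂ] H) → Hτ →L[ℂ] Hτ) (hW : ∀ U ∈ G, ∀ ξ η, W U (tp ξ η) = tp (U ξ) (U η))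
    (hsum : ∀ s : Finset (H →L[ℂ] H), ↑s ⊆ G → ‖∑ U ∈ s, W U‖ = s.card)
    {s : Finset (H →L[ℂ] H)} (hs : ↑s ⊆ G) {ε : ℝ} (hε : 0 < ε) :
    ∃ t : FiniteTensor H, ‖t.eval tp‖ = 1 ∧ ∀ U ∈ s, ‖W U (t.eval tp) - t.eval tp‖ < ε := by
  classical
  have hs₁ : ↑(insert 1 s) ⊆ G := by
    rw [Finset.coe_insert]
    exact Set.insert_subset hG₁ hs
  have hW₁ : W 1 = 1 :=
    ContinuousLinearMap.ext_on hdense (by rintro _ ⟨v, rfl⟩; simp [hW 1 hG₁])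
  obtain ⟨ζ, hζ, hζ₁, hζW⟩ := exists_mem_norm_apply_sub_lt _ hdense W
    (fun U hU => opNorm_le_one_of_apply_tensor_eq htp hdense (hW U (hs₁ hU)) (hG U (hs₁ hU)))
    (Finset.mem_insert_self 1 s) hW₁ (hsum _ hs₁) hε
  obtain ⟨t, rfl⟩ := FiniteTensor.exists_eval_eq_of_mem_span htp hζ
  exact ⟨t, hζ₁, fun U hU => hζW U (Finset.mem_insert_of_mem hU)⟩

end Hypertrace

theorem exists_hypertrace_of_norm_sum_tensor_eq_general
    {H : Type*} [NormedAddCommGroup H] [InnerProductSpace ℂ H] [CompleteSpace H]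
    (B : VonNeumannAlgebra H)
    -- Hτ together with tp is L²(B) ⊗ conj(L²(B)); W U = U ⊗ Ū
    {Hτ : Type*} [NormedAddCommGroup Hτ] [InnerProductSpace ℂ Hτ]
    (tp : H → H → Hτ)
    (htp_inner : ∀ ξ ξ' η η' : H,
      (inner ℂ (tp ξ η) (tp ξ' η') : ℂ) = (inner ℂ ξ ξ' : ℂ) * (inner ℂ η' η : ℂ))
    (htp_dense : Dense
      ((Submodule.span ℂ (Set.range fun v : H × H => tp v.1 v.2) : Submodule ℂ Hτ) : Set Hτ))
    (W : (H →L[ℂ] H) → (Hτ →L[ℂ] Hτ))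
    (hW : ∀ U : H →L[ℂ] H, U ∈ B → U ∈ unitary (H →L[ℂ] H) →
      ∀ ξ η : H, W U (tp ξ η) = tp (U ξ) (U η))
    -- hypothesis : ‖Σᵢ Uᵢ ⊗ Ūᵢ‖ = n for every finite family of unitaries of B
    (hnorm : ∀ (n : ℕ) (U : Fin n → (H →L[ℂ] H)),
      (∀ i, U i ∈ B) → (∀ i, U i ∈ unitary (H →L[ℂ] H)) →
      ‖∑ i, W (U i)‖ = (n : ℝ)) :
    -- conclusion : there exists a hypertrace for B
    ∃ ψ : (H →L[ℂ] H) →ₗ[ℂ] ℂ, ψ 1 = 1 ∧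
      (∀ a : H →L[ℂ] H, 0 ≤ ψ (star a * a)) ∧
      ∀ U : H →L[ℂ] H, U ∈ B → U ∈ unitary (H →L[ℂ] H) →
        ∀ a : H →L[ℂ] H, ψ (U * a * star U) = ψ a := by
  classical
  set G : Set (H →L[ℂ] H) := {U | U ∈ B ∧ U ∈ unitary (H →L[ℂ] H)}
  have hG₁ : (1 : H →L[ℂ] H) ∈ G := ⟨one_mem B, one_mem _⟩
  have hWG : ∀ U ∈ G, ∀ ξ η, W U (tp ξ η) = tp (U ξ) (U η) := fun U hU => hW U hU.1 hU.2
  have hsum : ∀ s : Finset (H →L[ℂ] H), ↑s ⊆ G → ‖∑ U ∈ s, W U‖ = s.card := fun s hs => by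
    rw [← Finset.sum_coe_sort, ← s.equivFin.symm.sum_comp]
    exact hnorm _ _ (fun i => (hs (s.equivFin.symm i).2).1) fun i => (hs (s.equivFin.symm i).2).2
  obtain ⟨t, ht₁, htW⟩ := exists_tendsto_zero_of_forall_finset G
    (fun t : FiniteTensor H => ‖t.eval tp‖ = 1) (fun U t => ‖W U (t.eval tp) - t.eval tp‖)
    (fun _ _ => norm_nonneg _) fun s hs _ hε =>
      exists_eval_norm_sub_lt htp_inner htp_dense hG₁ (fun U hU => hU.2.1) W hWG hsum hs hε
  have hinv : ∀ U ∈ G, ∀ a, Tendsto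
      (fun i => (t i).vectorState (U * a * star U) - (t i).vectorState a) atTop (𝓝 0) := by
    intro U hU a
    have hU' : star U ∈ G := ⟨star_mem hU.1, Unitary.star_mem hU.2⟩
    refine squeeze_zero_norm (fun i => ?_) (by simpa using (htW _ hU').const_mul (2 * ‖a‖))
    simpa using FiniteTensor.norm_vectorState_conj_sub_le htp_inner (hWG _ hU') hU'.2.1 (ht₁ i) a
  obtain ⟨ψ, hψ₁, hψ_nonneg, hψ_inv⟩ := exists_invariant_state_of_tendsto atTop
    (fun i => (t i).vectorState) (fun i => by simp [FiniteTensor.vectorState_one htp_inner, ht₁])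
    (fun i a => (t i).vectorState_nonneg htp_inner (star_mul_self_nonneg a))
    (fun i a => by simpa [ht₁] using (t i).norm_vectorState_le htp_inner a) G hinv
  exact ⟨ψ, hψ₁, hψ_nonneg, fun U hUB hU => hψ_inv U ⟨hUB, hU⟩⟩

/-- Let `B` be a finite factor with tracial state `τ`, acting standardly on
`L²(B)`, and let the unitary group `U(B)` (discrete) act on `A = B(L²(B))` by `Ad U`.
If for every finite family `U₁, …, U_n` of unitaries of `B` one has `‖Σᵢ Uᵢ ⊗ Ūᵢ‖ = n`,
then there exists a hypertrace for `B`: a state `ψ` on `B(L²(B))` with `ψ(U a U*) = ψ(a)`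
for all `U ∈ U(B)` and all `a`.  The conjugate tensor product `L²(B) ⊗ conj(L²(B))` is
axiomatized by `tp`, and `W U = U ⊗ Ū`. -/
theorem exists_hypertrace_of_norm_sum_tensor_eq
    {H : Type*} [NormedAddCommGroup H] [InnerProductSpace ℂ H] [CompleteSpace H]
    (B : VonNeumannAlgebra H)
    -- B is a factor
    (hfactor : ∀ x : H →L[ℂ] H, x ∈ B → x ∈ B.commutant → ∃ c : ℂ, x = c • (1 : H →L[ℂ] H))
    -- τ is a faithful tracial state on B (B is a finite factor)
    (τ : (H →L[ℂ] H) →ₗ[ℂ] ℂ)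
    (hτ1 : τ 1 = 1)
    (hτtr : ∀ a ∈ B, ∀ b ∈ B, τ (a * b) = τ (b * a))
    (hτpos : ∀ a ∈ B, 0 ≤ τ (star a * a))
    (hτfaith : ∀ a ∈ B, τ (star a * a) = 0 → a = 0)
    -- Hτ together with tp is L²(B) ⊗ conj(L²(B)); W U = U ⊗ Ū
    {Hτ : Type*} [NormedAddCommGroup Hτ] [InnerProductSpace ℂ Hτ] [CompleteSpace Hτ]
    (tp : H → H → Hτ)
    (htp_inner : ∀ ξ ξ' η η' : H,
      (inner ℂ (tp ξ η) (tp ξ' η') : ℂ) = (inner ℂ ξ ξ' : ℂ) * (inner ℂ η' η : ℂ))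
    (htp_dense : Dense
      ((Submodule.span ℂ (Set.range fun v : H × H => tp v.1 v.2) : Submodule ℂ Hτ) : Set Hτ))
    (W : (H →L[ℂ] H) → (Hτ →L[ℂ] Hτ))
    (hW : ∀ U : H →L[ℂ] H, U ∈ B → U ∈ unitary (H →L[ℂ] H) →
      ∀ ξ η : H, W U (tp ξ η) = tp (U ξ) (U η))
    -- hypothesis : ‖Σᵢ Uᵢ ⊗ Ūᵢ‖ = n for every finite family of unitaries of B
    (hnorm : ∀ (n : ℕ) (U : Fin n → (H →L[ℂ] H)),
      (∀ i, U i ∈ B) → (∀ i, U i ∈ unitary (H →L[ℂ] H)) →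
      ‖∑ i, W (U i)‖ = (n : ℝ)) :
    -- conclusion : there exists a hypertrace for B
    ∃ ψ : (H →L[ℂ] H) →ₗ[ℂ] ℂ, ψ 1 = 1 ∧
      (∀ a : H →L[ℂ] H, 0 ≤ ψ (star a * a)) ∧
      ∀ U : H →L[ℂ] H, U ∈ B → U ∈ unitary (H →L[ℂ] H) →
        ∀ a : H →L[ℂ] H, ψ (U * a * star U) = ψ a :=
  exists_hypertrace_of_norm_sum_tensor_eq_general B tp htp_inner htp_dense W hW hnorm
end
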